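/- arXiv:math/9210203 — 8 statements merged into one kernel-verified Lean document; each statement's English description precedes it below -/
import Mathlib

section
/- Let θ be a regular uncountable cardinal and assume that the principle □(θ) holds. Then there exists a zero-dimensional, first countable topological space that is <θ-collectionwise Hausdorff but not weakly θ-collectionwise Hausdorff. -/
open Cardinal Set TopologicalSpace

noncomputable section

/-- A subset `A` of a topological space is *separated* if there is a pairwise disjoint
family of open sets `U x` with `x ∈ U x` for each `x ∈ A`. -/
def IsSeparatedSet {X : Type*} [TopologicalSpace X] (A : Set X) : Prop :=
  ∃ U : X → Set X, (∀ x ∈ A, IsOpen (U x)) ∧ (∀ x ∈ A, x ∈ U x) ∧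
    ∀ x ∈ A, ∀ y ∈ A, x ≠ y → Disjoint (U x) (U y)

/-- A closed discrete subset of a topological space. -/
def IsClosedDiscreteSet {X : Type*} [TopologicalSpace X] (A : Set X) : Prop :=
  IsClosed A ∧ DiscreteTopology A

/-- `X` is `<κ`-collectionwise Hausdorff. -/
def CwHLt (X : Type) [TopologicalSpace X] (κ : Cardinal) : Prop :=
  ∀ A : Set X, IsClosedDiscreteSet A → #A < κ → IsSeparatedSet A

/-- `X` is `≤θ`-collectionwise Hausdorff. -/
def CwHLe (X : Type) [TopologicalSpace X] (θ : Cardinal) : Prop :=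
  ∀ A : Set X, IsClosedDiscreteSet A → #A ≤ θ → IsSeparatedSet A

/-- `X` is weakly `θ`-collectionwise Hausdorff. -/
def WeaklyCwH (X : Type) [TopologicalSpace X] (θ : Cardinal) : Prop :=
  ∀ A : Set X, IsClosedDiscreteSet A → #A = θ → ∃ B ⊆ A, #B = θ ∧ IsSeparatedSet B

/-- A space is zero-dimensional if it has a base of clopen sets. -/
def ZeroDimensional (X : Type*) [TopologicalSpace X] : Prop :=
  ∃ B : Set (Set X), IsTopologicalBasis B ∧ ∀ U ∈ B, IsClopen U

/-- A subset of `ω × ω` is closed downward. -/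
def IsCDW (H : Set (ℕ × ℕ)) : Prop :=
  ∀ p ∈ H, ∀ q : ℕ × ℕ, q.1 ≤ p.1 → q.2 ≤ p.2 → q ∈ H

/-- The fan `F_{θ,ω}`: points of `ι × ℕ` are isolated, and the sets
`B_f = {*} ∪ {(α, n) : f α ≤ n}` form a neighborhood base at `* = none`. -/
def fanTopology (ι : Type*) : TopologicalSpace (Option (ι × ℕ)) where
  IsOpen U := none ∈ U → ∃ f : ι → ℕ, ∀ p : ι × ℕ, f p.1 ≤ p.2 → some p ∈ U
  isOpen_univ := fun _ => ⟨fun _ => 0, fun _ _ => trivial⟩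
  isOpen_inter := by
    intro U V hU hV hmem
    obtain ⟨f, hf⟩ := hU hmem.1
    obtain ⟨g, hg⟩ := hV hmem.2
    exact ⟨fun α => max (f α) (g α), fun p hp =>
      ⟨hf p (le_trans (le_max_left _ _) hp), hg p (le_trans (le_max_right _ _) hp)⟩⟩
  isOpen_sUnion := by
    intro S hS hmem
    obtain ⟨U, hU, hnU⟩ := hmem
    obtain ⟨f, hf⟩ := hS U hU hnU
    exact ⟨f, fun p hp => ⟨U, hU, hf p hp⟩⟩

/-- The square of the fan `F_{θ,ω}`, with the product topology. -/
def fanSqTopology (ι : Type*) : TopologicalSpace (Option (ι × ℕ) × Option (ι × ℕ)) :=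
  @instTopologicalSpaceProd _ _ (fanTopology ι) (fanTopology ι)

/-- A subset `S` of `F_{θ,ω} × F_{θ,ω}` is `θ`-good if `(*,*)` is in the closure of `S`,
but not in the closure of any subset of `S` of cardinality `< θ`. -/
def IsThetaGood {ι : Type} (θ : Cardinal) (S : Set (Option (ι × ℕ) × Option (ι × ℕ))) : Prop :=
  (none, none) ∈ @closure _ (fanSqTopology ι) S ∧
    ∀ T ⊆ S, #T < θ → (none, none) ∉ @closure _ (fanSqTopology ι) T

/-- `C` is club in the (well-ordered) type `ι`: unbounded and closed under suprema of its
bounded nonempty subsets. -/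
def IsClubIn {ι : Type*} [LinearOrder ι] (C : Set ι) : Prop :=
  (∀ x : ι, ∃ y ∈ C, x < y) ∧
    ∀ s ⊆ C, s.Nonempty → ∀ x : ι, IsLUB s x → x ∈ C

/-- `S` is stationary in `ι`: it meets every club. -/
def IsStationaryIn {ι : Type*} [LinearOrder ι] (S : Set ι) : Prop :=
  ∀ C : Set ι, IsClubIn C → (S ∩ C).Nonempty

/-- `C` is a club subset of (the set of elements below) `γ`. -/
def IsClubBelow {ι : Type*} [LinearOrder ι] (C : Set ι) (γ : ι) : Prop :=
  C ⊆ Set.Iio γ ∧ (∀ x < γ, ∃ y ∈ C, x < y) ∧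
    ∀ s ⊆ C, s.Nonempty → ∀ x < γ, IsLUB s x → x ∈ C

/-- `S` is stationary below `γ`: it meets every club subset of `γ`. -/
def IsStationaryBelow {ι : Type*} [LinearOrder ι] (S : Set ι) (γ : ι) : Prop :=
  ∀ C : Set ι, IsClubBelow C γ → (S ∩ C).Nonempty

/-- `γ` is a limit element: nonzero and with no immediate predecessor. -/
def IsLimitElem {ι : Type*} [LinearOrder ι] (γ : ι) : Prop :=
  (∃ x, x < γ) ∧ ∀ x < γ, ∃ y, x < y ∧ y < γ

/-- `α` is a limit point of the set `s`. -/
def IsLimitPtOf {ι : Type*} [LinearOrder ι] (α : ι) (s : Set ι) : Prop :=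
  (∃ x, x < α) ∧ ∀ x < α, ∃ y ∈ s, x < y ∧ y < α

/-- `α` is a limit of countable cofinality: there is a strictly increasing `ω`-sequence
below `α` whose range is cofinal in `α`. -/
def CofOmega {ι : Type*} [LinearOrder ι] (α : ι) : Prop :=
  ∃ b : ℕ → ι, StrictMono b ∧ (∀ n, b n < α) ∧ ∀ ξ < α, ∃ n, ξ ≤ b n

/-- `E` is non-reflecting: `E ∩ γ` is non-stationary in `γ` for every limit `γ`. -/
def NonReflecting {ι : Type*} [LinearOrder ι] (E : Set ι) : Prop :=
  ∀ γ : ι, IsLimitElem γ → ¬ IsStationaryBelow (E ∩ Set.Iio γ) γ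

/-- The principle `□(θ)` for the well-order `ι` (of order type the initial ordinal of `θ`). -/
def SquareTheta (ι : Type*) [LinearOrder ι] : Prop :=
  ∃ C : ι → Set ι,
    (∀ α, IsLimitElem α → IsClubBelow (C α) α) ∧
    (∀ β, IsLimitElem β → ∀ α, IsLimitPtOf α (C β) → C α = C β ∩ Set.Iio α) ∧
    ¬ ∃ D : Set ι, IsClubIn D ∧ ∀ α, IsLimitPtOf α D → C α = D ∩ Set.Iio α

/-- `g` weakly bounds `h β` (where `h β` represents the function `h_β : β → ω`,
via `ξ ↦ h β ξ` for `ξ < β`): there is `n` with `g ξ + n > h β ξ` for all `ξ < β`. -/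
def WeaklyBounds {ι : Type*} [LinearOrder ι] (g : ι → ℕ) (h : ι → ι → ℕ) (β : ι) : Prop :=
  ∃ n : ℕ, ∀ ξ < β, h β ξ < g ξ + n

/-- The family `{h_β : β ∈ A}` is weakly bounded: a single `g` weakly bounds every member. -/
def WeaklyBoundedFam {ι : Type*} [LinearOrder ι] (h : ι → ι → ℕ) (A : Set ι) : Prop :=
  ∃ g : ι → ℕ, ∀ β ∈ A, WeaklyBounds g h β

/-- The `θ`-family `h` is initially weakly bounded. -/
def IWB {ι : Type} [LinearOrder ι] (θ : Cardinal) (h : ι → ι → ℕ) : Prop :=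
  ∀ A : Set ι, #A < θ → WeaklyBoundedFam h A

/-- The `θ`-family `h` is non-extendible: the whole family is not weakly bounded. -/
def NonExtendible {ι : Type*} [LinearOrder ι] (h : ι → ι → ℕ) : Prop :=
  ¬ WeaklyBoundedFam h Set.univ

end
noncomputable section
namespace SqProof
open Cardinal Set Classical
set_option linter.unusedSectionVars false
set_option linter.unusedVariables false

variable {ι : Type} [LinearOrder ι] [WellFoundedLT ι]

lemma exists_isLUB_of_bdd {s : Set ι} (hne : s.Nonempty) (hbd : ∃ z, ∀ x ∈ s, x ≤ z) :
    ∃ x, IsLUB s x := by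
  have hub : (upperBounds s).Nonempty := by
    obtain ⟨z, hz⟩ := hbd; exact ⟨z, fun x hx => hz x hx⟩
  refine ⟨wellFounded_lt.min _ hub, wellFounded_lt.min_mem _ hub, fun y hy => ?_⟩
  exact not_lt.1 (wellFounded_lt.not_lt_min _ hy)

variable (θ : Cardinal)

/-- abbreviation for the boundedness hypothesis -/
def HB : Prop := ∀ s : Set ι, #s < θ → ∃ z, ∀ x ∈ s, x < z

variable {θ}

lemma HB.exists_gt (hbdd : HB (ι := ι) θ) (hθ : ℵ₀ < θ) (x : ι) : ∃ y, x < y := by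
  obtain ⟨z, hz⟩ := hbdd {x} (by
    have : #({x} : Set ι) = 1 := mk_singleton x
    rw [this]; exact lt_trans one_lt_aleph0 hθ)
  exact ⟨z, hz x rfl⟩

lemma HB.exists_gt2 (hbdd : HB (ι := ι) θ) (hθ : ℵ₀ < θ) (x y : ι) : ∃ z, x < z ∧ y < z := by
  obtain ⟨z, hz⟩ := hbdd {x, y} (by
    apply lt_of_le_of_lt (mk_insert_le)
    have : #({y} : Set ι) = 1 := mk_singleton y
    rw [this]
    exact Cardinal.add_lt_of_lt (le_of_lt hθ) (lt_trans one_lt_aleph0 hθ) (lt_trans one_lt_aleph0 hθ))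
  exact ⟨z, hz x (by simp), hz y (by simp)⟩

/-- countable sets are bounded (strictly) -/
lemma HB.countable_bdd (hbdd : HB (ι := ι) θ) (hθ : ℵ₀ < θ) (g : ℕ → ι) :
    ∃ z, ∀ n, g n < z := by
  obtain ⟨z, hz⟩ := hbdd (Set.range g) (lt_of_le_of_lt (mk_range_le.trans (by simp)) hθ)
  exact ⟨z, fun n => hz _ ⟨n, rfl⟩⟩

/-- LUB of the range of a strictly monotone ℕ-chain -/
lemma HB.exists_isLUB_chain (hbdd : HB (ι := ι) θ) (hθ : ℵ₀ < θ) (g : ℕ → ι) :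
    ∃ y, IsLUB (Set.range g) y := by
  obtain ⟨z, hz⟩ := hbdd.countable_bdd hθ g
  exact exists_isLUB_of_bdd ⟨g 0, ⟨0, rfl⟩⟩ ⟨z, fun x ⟨n, hn⟩ => hn ▸ (hz n).le⟩

lemma isLUB_lt_elem {s : Set ι} {y x : ι} (h : IsLUB s y) (hx : x < y) :
    ∃ w ∈ s, x < w := by
  by_contra hc
  push_neg at hc
  exact absurd (h.2 fun w hw => not_lt.1 fun hh => absurd hh (not_lt.2 (hc w hw))) (not_le.2 hx)

/-- Key existence lemma: intersections of fewer than `θ` clubs are unbounded. -/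
lemma clubs_exists_gt (hbdd : HB (ι := ι) θ) (hθ : ℵ₀ < θ) {κ : Type} (hκ : #κ < θ)
    {F : κ → Set ι} (hF : ∀ i, IsClubIn (F i)) (x₀ : ι) :
    ∃ y, x₀ < y ∧ ∀ i, y ∈ F i := by
  -- one step
  have step : ∀ x : ι, ∃ y, x < y ∧ ∀ i, ∃ w ∈ F i, x < w ∧ w < y := by
    intro x
    choose z hz1 hz2 using fun i => (hF i).1 x
    obtain ⟨y, hy⟩ := hbdd (Set.range z ∪ {x})
      (lt_of_le_of_lt (mk_union_le _ _)
        (Cardinal.add_lt_of_lt (le_of_lt hθ) (lt_of_le_of_lt mk_range_le hκ)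
          (by rw [mk_singleton]; exact lt_trans one_lt_aleph0 hθ)))
    exact ⟨y, hy x (by simp), fun i => ⟨z i, hz1 i, hz2 i, hy _ (Or.inl ⟨i, rfl⟩)⟩⟩
  set st : ι → ι := fun x => Classical.choose (step x) with hst
  have hst1 : ∀ x, x < st x := fun x => (Classical.choose_spec (step x)).1
  have hst2 : ∀ x, ∀ i, ∃ w ∈ F i, x < w ∧ w < st x := fun x => (Classical.choose_spec (step x)).2
  set g : ℕ → ι := fun n => st^[n+1] x₀ with hg
  have hgsucc : ∀ n, g (n + 1) = st (g n) := by
    intro n; rw [hg]; simp [Function.iterate_succ_apply']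
  have hgmono : StrictMono g := strictMono_nat_of_lt_succ (fun n => by rw [hgsucc]; exact hst1 _)
  obtain ⟨y, hy⟩ := hbdd.exists_isLUB_chain hθ g
  have hg0 : g 0 = st x₀ := rfl
  have hx₀ : x₀ < y := lt_of_lt_of_le (hg0 ▸ hst1 x₀) (hy.1 ⟨0, rfl⟩)
  refine ⟨y, hx₀, fun i => ?_⟩
  -- the witnesses inside F i between consecutive g's
  have hw : ∀ n, ∃ w ∈ F i, g n < w ∧ w < g (n+1) := by
    intro n; rw [hgsucc]; exact hst2 (g n) i
  choose w hw1 hw2 hw3 using hw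
  have hsub : Set.range w ⊆ F i := fun x ⟨n, hn⟩ => hn ▸ hw1 n
  have hlub : IsLUB (Set.range w) y := by
    constructor
    · rintro x ⟨n, rfl⟩
      exact le_of_lt (lt_of_lt_of_le (hw3 n) (hy.1 ⟨n+1, rfl⟩))
    · intro c hc
      refine hy.2 ?_
      rintro x ⟨n, rfl⟩
      exact le_of_lt (lt_of_lt_of_le (hw2 n) (hc ⟨n, rfl⟩))
  exact (hF i).2 _ hsub ⟨w 0, ⟨0, rfl⟩⟩ y hlub

lemma club_inter {A B : Set ι} (hbdd : HB (ι := ι) θ) (hθ : ℵ₀ < θ)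
    (hA : IsClubIn A) (hB : IsClubIn B) : IsClubIn (A ∩ B) := by
  constructor
  · intro x
    obtain ⟨y, hy1, hy2⟩ := clubs_exists_gt hbdd hθ
      (κ := Bool) (lt_trans (by rw [mk_fintype]; simpa using nat_lt_aleph0 2) hθ)
      (F := fun b => bif b then A else B) (fun b => by cases b <;> simpa) x
    exact ⟨y, ⟨by simpa using hy2 true, by simpa using hy2 false⟩, hy1⟩
  · intro s hs hne x hx
    exact ⟨hA.2 s (fun z hz => (hs hz).1) hne x hx, hB.2 s (fun z hz => (hs hz).2) hne x hx⟩

lemma isClubIn_Ioi (hbdd : HB (ι := ι) θ) (hθ : ℵ₀ < θ) (x : ι) : IsClubIn (Set.Ioi x) := by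
  constructor
  · intro z
    obtain ⟨w, hw1, hw2⟩ := hbdd.exists_gt2 hθ x z
    exact ⟨w, hw1, hw2⟩
  · intro s hs hne z hz
    obtain ⟨w, hw⟩ := hne
    exact lt_of_lt_of_le (hs hw) (hz.1 hw)

lemma stat_nonempty_inter {S C : Set ι} (hS : IsStationaryIn S) (hC : IsClubIn C) :
    (S ∩ C).Nonempty := hS C hC

lemma stat_unbounded {S : Set ι} (hbdd : HB (ι := ι) θ) (hθ : ℵ₀ < θ)
    (hS : IsStationaryIn S) (x : ι) : ∃ α ∈ S, x < α := by
  obtain ⟨α, hα1, hα2⟩ := hS _ (isClubIn_Ioi hbdd hθ x)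
  exact ⟨α, hα1, hα2⟩

lemma club_isStationaryIn {C : Set ι} (hbdd : HB (ι := ι) θ) (hθ : ℵ₀ < θ) [Nonempty ι]
    (hC : IsClubIn C) : IsStationaryIn C := by
  intro D hD
  obtain ⟨x⟩ := ‹Nonempty ι›
  obtain ⟨y, _, hy⟩ := clubs_exists_gt hbdd hθ (κ := Bool)
    (lt_trans (by rw [mk_fintype]; simpa using nat_lt_aleph0 2) hθ)
    (F := fun b => bif b then C else D) (fun b => by cases b <;> simpa) x
  exact ⟨y, by simpa using hy true, by simpa using hy false⟩

lemma stat_inter_club {S C : Set ι} (hbdd : HB (ι := ι) θ) (hθ : ℵ₀ < θ)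
    (hS : IsStationaryIn S) (hC : IsClubIn C) : IsStationaryIn (S ∩ C) := by
  intro D hD
  obtain ⟨α, hα1, hα2⟩ := hS _ (club_inter hbdd hθ hC hD)
  exact ⟨α, ⟨hα1, hα2.1⟩, hα2.2⟩

end SqProof
end
noncomputable section
namespace SqProof
open Cardinal Set Classical
set_option linter.unusedSectionVars false
set_option linter.unusedVariables false

variable {ι : Type} [LinearOrder ι] [WellFoundedLT ι] {θ : Cardinal}

/-- the set of limit points of `B` -/
def limPts (B : Set ι) : Set ι := {α | IsLimitPtOf α B}

lemma limPt_isLimitElem {B : Set ι} {α : ι} (h : α ∈ limPts B) : IsLimitElem α :=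
  ⟨h.1, fun x hx => by obtain ⟨y, _, hy1, hy2⟩ := h.2 x hx; exact ⟨y, hy1, hy2⟩⟩

lemma isClubIn_limPts (hbdd : HB (ι := ι) θ) (hθ : ℵ₀ < θ) {B : Set ι}
    (hB : ∀ x : ι, ∃ b ∈ B, x < b) : IsClubIn (limPts B) := by
  constructor
  · -- unbounded
    intro x₀
    have step : ∀ x : ι, ∃ b ∈ B, x < b := hB
    set st : ι → ι := fun x => Classical.choose (step x) with hst
    have hst1 : ∀ x, st x ∈ B := fun x => (Classical.choose_spec (step x)).1
    have hst2 : ∀ x, x < st x := fun x => (Classical.choose_spec (step x)).2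
    set g : ℕ → ι := fun n => st^[n+1] x₀ with hg
    have hgsucc : ∀ n, g (n + 1) = st (g n) := by
      intro n; rw [hg]; simp [Function.iterate_succ_apply']
    have hgB : ∀ n, g n ∈ B := by
      intro n; cases n with
      | zero => exact hst1 x₀
      | succ m => rw [hgsucc]; exact hst1 _
    have hgmono : StrictMono g := strictMono_nat_of_lt_succ (fun n => by rw [hgsucc]; exact hst2 _)
    obtain ⟨y, hy⟩ := hbdd.exists_isLUB_chain hθ g
    have hg0 : g 0 = st x₀ := rfl
    have hx₀ : x₀ < y := lt_of_lt_of_le (hg0 ▸ hst2 x₀) (hy.1 ⟨0, rfl⟩)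
    have hlt : ∀ n, g n < y := by
      intro n
      exact lt_of_lt_of_le (hgmono (Nat.lt_succ_self n)) (hy.1 ⟨n+1, rfl⟩)
    refine ⟨y, ⟨⟨x₀, hx₀⟩, fun x hx => ?_⟩, hx₀⟩
    -- density
    have : ∃ n, x < g n := by
      by_contra hc
      push_neg at hc
      exact absurd (hy.2 (by rintro w ⟨n, rfl⟩; exact hc n)) (not_le.2 hx)
    obtain ⟨n, hn⟩ := this
    exact ⟨g n, hgB n, hn, hlt n⟩
  · -- closed
    intro s hs hne y hy
    by_cases hys : y ∈ s
    · exact hs hys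
    have hsy : ∀ x < y, ∃ α ∈ s, x < α ∧ α < y := by
      intro x hx
      obtain ⟨α, hαs, hα⟩ := isLUB_lt_elem hy hx
      have : α < y := lt_of_le_of_ne (hy.1 hαs) (fun h => hys (h ▸ hαs))
      exact ⟨α, hαs, hα, this⟩
    obtain ⟨α₀, hα₀s⟩ := hne
    have hα₀y : α₀ ≤ y := hy.1 hα₀s
    have hex : ∃ x, x < y := by
      obtain ⟨x, hx⟩ := (hs hα₀s).1
      rcases lt_or_eq_of_le hα₀y with h | h
      · exact ⟨α₀, h⟩
      · exact ⟨x, h ▸ hx⟩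
    refine ⟨hex, fun x hx => ?_⟩
    obtain ⟨α, hαs, hα1, hα2⟩ := hsy x hx
    obtain ⟨w, hwB, hw1, hw2⟩ := (hs hαs).2 x hα1
    exact ⟨w, hwB, hw1, lt_trans hw2 hα2⟩

/-- Fodor's lemma -/
lemma fodor (hbdd : HB (ι := ι) θ) (hθ : ℵ₀ < θ) (hIio : ∀ x : ι, #(Set.Iio x) < θ)
    {S : Set ι} (hS : IsStationaryIn S) {f : ι → ι} (hf : ∀ α ∈ S, f α < α) :
    ∃ γ, IsStationaryIn {α | α ∈ S ∧ f α = γ} := by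
  by_contra hc
  push_neg at hc
  have hc' : ∀ γ : ι, ∃ D, IsClubIn D ∧ {α | α ∈ S ∧ f α = γ} ∩ D = ∅ := by
    intro γ
    have := hc γ
    rw [IsStationaryIn] at this
    push_neg at this
    obtain ⟨D, hD1, hD2⟩ := this
    exact ⟨D, hD1, hD2⟩
  choose F hF1 hF2 using hc'
  -- diagonal intersection
  set Δ : Set ι := {α | ∀ γ < α, α ∈ F γ} with hΔ
  have hΔclub : IsClubIn Δ := by
    constructor
    · -- unbounded
      intro x₀
      have hIic : ∀ x : ι, #(Set.Iic x) < θ := by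
        intro x
        obtain ⟨z, hz⟩ := hbdd.exists_gt hθ x
        exact lt_of_le_of_lt (mk_le_mk_of_subset (fun w hw => lt_of_le_of_lt hw hz)) (hIio z)
      have step : ∀ x : ι, ∃ y, x < y ∧ ∀ γ ≤ x, y ∈ F γ := by
        intro x
        obtain ⟨y, hy1, hy2⟩ := clubs_exists_gt hbdd hθ (κ := (Set.Iic x : Set ι))
          (by simpa using hIic x) (F := fun γ => F γ.1) (fun γ => hF1 γ.1) x
        exact ⟨y, hy1, fun γ hγ => hy2 ⟨γ, hγ⟩⟩
      set st : ι → ι := fun x => Classical.choose (step x) with hst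
      have hst1 : ∀ x, x < st x := fun x => (Classical.choose_spec (step x)).1
      have hst2 : ∀ x, ∀ γ ≤ x, st x ∈ F γ := fun x => (Classical.choose_spec (step x)).2
      set g : ℕ → ι := fun n => st^[n+1] x₀ with hg
      have hgsucc : ∀ n, g (n + 1) = st (g n) := by
        intro n; rw [hg]; simp [Function.iterate_succ_apply']
      have hgmono : StrictMono g := strictMono_nat_of_lt_succ (fun n => by rw [hgsucc]; exact hst1 _)
      obtain ⟨y, hy⟩ := hbdd.exists_isLUB_chain hθ g
      have hg0 : g 0 = st x₀ := rfl
      have hx₀ : x₀ < y := lt_of_lt_of_le (hg0 ▸ hst1 x₀) (hy.1 ⟨0, rfl⟩)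
      have hlt : ∀ n, g n < y := fun n =>
        lt_of_lt_of_le (hgmono (Nat.lt_succ_self n)) (hy.1 ⟨n+1, rfl⟩)
      refine ⟨y, fun γ hγ => ?_, hx₀⟩
      -- γ < y ; find n with γ < g n
      have : ∃ n, γ < g n := by
        by_contra hcc
        push_neg at hcc
        exact absurd (hy.2 (by rintro w ⟨n, rfl⟩; exact hcc n)) (not_le.2 hγ)
      obtain ⟨n, hn⟩ := this
      have hmem : ∀ m, n ≤ m → g (m+1) ∈ F γ := by
        intro m hm
        rw [hgsucc]
        exact hst2 (g m) γ (le_of_lt (lt_of_lt_of_le hn (hgmono.le_iff_le.2 hm)))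
      -- y is LUB of the tail
      set s : Set ι := {w | ∃ m, n ≤ m ∧ w = g (m+1)} with hs
      have hsF : s ⊆ F γ := by rintro w ⟨m, hm, rfl⟩; exact hmem m hm
      have hslub : IsLUB s y := by
        constructor
        · rintro w ⟨m, hm, rfl⟩; exact hy.1 ⟨m+1, rfl⟩
        · intro c hcub
          refine hy.2 ?_
          rintro w ⟨m, rfl⟩
          calc g m ≤ g (max m n + 1) := hgmono.le_iff_le.2 (le_trans (le_max_left m n) (Nat.le_succ _))
          _ ≤ c := hcub ⟨max m n, le_max_right m n, rfl⟩
      exact (hF1 γ).2 s hsF ⟨g (n+1), n, le_rfl, rfl⟩ y hslub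
    · -- closed
      intro s hs hne y hy
      intro γ hγ
      by_cases hys : y ∈ s
      · exact hs hys γ hγ
      have hne2 : ∃ α ∈ s, γ < α := by
        obtain ⟨α, hαs, hα⟩ := isLUB_lt_elem hy hγ
        exact ⟨α, hαs, hα⟩
      set s' : Set ι := {α | α ∈ s ∧ γ < α} with hs'
      have hs'F : s' ⊆ F γ := fun α hα => hs hα.1 γ hα.2
      have hs'lub : IsLUB s' y := by
        constructor
        · exact fun α hα => hy.1 hα.1
        · intro c hcub
          refine hy.2 fun α hαs => ?_
          rcases le_or_gt α γ with h | h
          · obtain ⟨β, hβs, hβ⟩ := hne2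
            exact le_trans h (le_trans (le_of_lt hβ) (hcub ⟨hβs, hβ⟩))
          · exact hcub ⟨hαs, h⟩
      exact (hF1 γ).2 s' hs'F hne2 y hs'lub
  obtain ⟨α, hαS, hαΔ⟩ := hS Δ hΔclub
  have h1 : α ∈ F (f α) := hαΔ (f α) (hf α hαS)
  have h2 : α ∈ {β | β ∈ S ∧ f β = f α} ∩ F (f α) := ⟨⟨hαS, rfl⟩, h1⟩
  rw [hF2 (f α)] at h2
  exact h2

end SqProof
end
noncomputable section
namespace SqProof
open Cardinal Set Classical
set_option linter.unusedSectionVars false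
set_option linter.unusedVariables false

variable {ι : Type} [LinearOrder ι] [WellFoundedLT ι]

variable (C : ι → Set ι)

/-- the walk guide sets: `C β` at limits, the predecessor at successors -/
def Dset (β : ι) : Set ι :=
  (if IsLimitElem β then C β else {η | ∀ z < β, z ≤ η}) ∩ Set.Iio β

lemma Dset_lt {β η : ι} (h : η ∈ Dset C β) : η < β := h.2

def stepSet (β ξ : ι) : Set ι := {η | η ∈ Dset C β ∧ ξ ≤ η}

def nextStep (β ξ : ι) : ι :=
  if h : (stepSet C β ξ).Nonempty then wellFounded_lt.min _ h else ξ

lemma nextStep_mem {β ξ : ι} (h : (stepSet C β ξ).Nonempty) :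
    nextStep C β ξ ∈ stepSet C β ξ := by
  rw [nextStep, dif_pos h]; exact wellFounded_lt.min_mem _ h

lemma nextStep_le {β ξ : ι} (h : (stepSet C β ξ).Nonempty) {w : ι} (hw : w ∈ stepSet C β ξ) :
    nextStep C β ξ ≤ w := by
  rw [nextStep, dif_pos h]
  exact not_lt.1 (wellFounded_lt.not_lt_min _ hw)

lemma nextStep_lt {β ξ : ι} (h : (stepSet C β ξ).Nonempty) : nextStep C β ξ < β :=
  Dset_lt C (nextStep_mem C h).1

lemma nextStep_ge {β ξ : ι} (h : (stepSet C β ξ).Nonempty) : ξ ≤ nextStep C β ξ :=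
  (nextStep_mem C h).2

lemma nextStep_unique {β ξ x : ι} (h : (stepSet C β ξ).Nonempty)
    (hx : x ∈ stepSet C β ξ) (hmin : ∀ w ∈ stepSet C β ξ, x ≤ w) :
    nextStep C β ξ = x :=
  le_antisymm (nextStep_le C h hx) (hmin _ (nextStep_mem C h))

/-- the number of steps of the walk from `β` down to `ξ` -/
def rho2 (ξ : ι) : ι → ℕ :=
  wellFounded_lt.fix (fun β ih =>
    if h : ξ < β ∧ (stepSet C β ξ).Nonempty then ih (nextStep C β ξ) (nextStep_lt C h.2) + 1
    else 0)

lemma rho2_eq (ξ β : ι) :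
    rho2 C ξ β = if h : ξ < β ∧ (stepSet C β ξ).Nonempty then
      rho2 C ξ (nextStep C β ξ) + 1 else 0 := by
  rw [rho2, WellFounded.fix_eq]

lemma rho2_zero {ξ β : ι} (h : ¬ ξ < β) : rho2 C ξ β = 0 := by
  rw [rho2_eq, dif_neg]; tauto

section withSq

variable (hC1 : ∀ α, IsLimitElem α → IsClubBelow (C α) α)

include hC1

omit hC1 in
lemma not_limitElem_of_max {β x : ι} (hx1 : x < β) (hxmax : ∀ z < β, z ≤ x) :
    ¬ IsLimitElem β := fun hlim => by
  obtain ⟨y, hy1, hy2⟩ := hlim.2 x hx1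
  exact absurd (hxmax y hy2) (not_le.2 hy1)

omit hC1 in
lemma exists_max_below {β ξ : ι} (h : ξ < β) (hβ : ¬ IsLimitElem β) :
    ∃ x, x < β ∧ ∀ z < β, z ≤ x := by
  rw [IsLimitElem] at hβ
  push_neg at hβ
  obtain ⟨x, hx1, hx2⟩ := hβ ⟨ξ, h⟩
  exact ⟨x, hx1, fun z hz => not_lt.1 fun hzx => absurd hz (not_lt.2 (hx2 z hzx))⟩

omit hC1 in
lemma Dset_eq_singleton {β x : ι} (hx1 : x < β) (hxmax : ∀ z < β, z ≤ x) :
    Dset C β = {x} := by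
  rw [Dset, if_neg (not_limitElem_of_max hx1 hxmax)]
  ext w
  constructor
  · rintro ⟨h1, h2⟩
    exact le_antisymm (hxmax w h2) (h1 x hx1)
  · rintro rfl
    exact ⟨fun z hz => hxmax z hz, hx1⟩


lemma stepSet_nonempty {β ξ : ι} (h : ξ < β) : (stepSet C β ξ).Nonempty := by
  by_cases hβ : IsLimitElem β
  · obtain ⟨y, hy1, hy2⟩ := (hC1 β hβ).2.1 ξ h
    have hyβ : y < β := (hC1 β hβ).1 hy1
    exact ⟨y, ⟨by rw [Dset, if_pos hβ]; exact ⟨hy1, hyβ⟩, le_of_lt hy2⟩⟩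
  · rw [IsLimitElem] at hβ
    push_neg at hβ
    obtain ⟨x, hx1, hx2⟩ := hβ ⟨ξ, h⟩
    have hxmax : ∀ z < β, z ≤ x := fun z hz => not_lt.1 fun hzx => absurd hz (not_lt.2 (hx2 z hzx))
    have hβ' : ¬ IsLimitElem β := not_limitElem_of_max hx1 hxmax
    refine ⟨x, ⟨by rw [Dset, if_neg hβ']; exact ⟨hxmax, hx1⟩, hxmax ξ h⟩⟩

lemma rho2_pos {ξ β : ι} (h : ξ < β) :
    rho2 C ξ β = rho2 C ξ (nextStep C β ξ) + 1 := by
  rw [rho2_eq, dif_pos ⟨h, stepSet_nonempty C hC1 h⟩]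

lemma rho2_one_le {ξ β : ι} (h : ξ < β) : 1 ≤ rho2 C ξ β := by
  rw [rho2_pos C hC1 h]; omega

omit hC1 in
lemma Dset_subsingleton_of_not_limit {β : ι} (hβ : ¬ IsLimitElem β) :
    ∀ a ∈ Dset C β, ∀ b ∈ Dset C β, a = b := by
  intro a ha b hb
  rw [Dset, if_neg hβ] at ha hb
  exact le_antisymm (hb.1 a ha.2) (ha.1 b hb.2)

omit hC1 in
lemma limitPt_two {s : Set ι} {ξ : ι} (h : IsLimitPtOf ξ s) :
    ∃ a ∈ s, ∃ b ∈ s, a ≠ b := by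
  obtain ⟨x, hx⟩ := h.1
  obtain ⟨a, has, ha1, ha2⟩ := h.2 x hx
  obtain ⟨b, hbs, hb1, hb2⟩ := h.2 a ha2
  exact ⟨a, has, b, hbs, ne_of_lt hb1⟩

variable (hC2 : ∀ β, IsLimitElem β → ∀ α, IsLimitPtOf α (C β) → C α = C β ∩ Set.Iio α)

include hC2

/-- Tail coherence of walks. -/
lemma walkW : ∀ β ξ : ι, ξ < β → IsLimitElem ξ →
    (IsLimitPtOf ξ (Dset C β) ∧ ∀ ζ, ζ < ξ → rho2 C ζ β = rho2 C ζ ξ) ∨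
    (∃ i l, 1 ≤ i ∧ l < ξ ∧ ∀ ζ, l < ζ → ζ < ξ → rho2 C ζ β = rho2 C ζ ξ + i) := by
  refine wellFounded_lt.fix ?_
  intro β IH ξ hξβ hξlim
  by_cases hlp : IsLimitPtOf ξ (Dset C β)
  · -- coherent case
    left
    refine ⟨hlp, fun ζ hζ => ?_⟩
    have hβlim : IsLimitElem β := by
      by_contra hβ
      obtain ⟨a, ha, b, hb, hab⟩ := limitPt_two (s := Dset C β) hlp
      exact hab (Dset_subsingleton_of_not_limit C hβ a ha b hb)
    have hDβ : Dset C β = C β ∩ Set.Iio β := by rw [Dset, if_pos hβlim]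
    have hlpC : IsLimitPtOf ξ (C β) := by
      refine ⟨hlp.1, fun x hx => ?_⟩
      obtain ⟨y, hy, hy1, hy2⟩ := hlp.2 x hx
      rw [hDβ] at hy
      exact ⟨y, hy.1, hy1, hy2⟩
    have hCξ : C ξ = C β ∩ Set.Iio ξ := hC2 β hβlim ξ hlpC
    have hDeq : Dset C ξ = Dset C β ∩ Set.Iio ξ := by
      rw [Dset, if_pos hξlim, hCξ, hDβ]
      ext w
      constructor
      · rintro ⟨⟨h1, h2⟩, h3⟩
        exact ⟨⟨h1, lt_trans h3 hξβ⟩, h3⟩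
      · rintro ⟨⟨h1, h2⟩, h3⟩
        exact ⟨⟨h1, h3⟩, h3⟩
    -- next steps agree
    have hnext : ∀ ζ, ζ < ξ → nextStep C β ζ = nextStep C ξ ζ := by
      intro ζ hζξ
      obtain ⟨w, hw, hw1, hw2⟩ := hlp.2 ζ hζξ
      have hwstep : w ∈ stepSet C β ζ := ⟨hw, le_of_lt hw1⟩
      have hneβ : (stepSet C β ζ).Nonempty := ⟨w, hwstep⟩
      have hstepeq : stepSet C ξ ζ = stepSet C β ζ ∩ Set.Iio ξ := by
        rw [stepSet, stepSet, hDeq]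
        ext u
        exact ⟨fun ⟨⟨u1, u2⟩, u3⟩ => ⟨⟨u1, u3⟩, u2⟩, fun ⟨⟨u1, u3⟩, u2⟩ => ⟨⟨u1, u2⟩, u3⟩⟩
      have hmemξ : nextStep C β ζ ∈ stepSet C ξ ζ := by
        rw [hstepeq]
        exact ⟨nextStep_mem C hneβ, lt_of_le_of_lt (nextStep_le C hneβ hwstep) hw2⟩
      have hneξ : (stepSet C ξ ζ).Nonempty := ⟨_, hmemξ⟩
      refine (nextStep_unique C hneξ hmemξ (fun u hu => ?_)).symm
      rw [hstepeq] at hu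
      exact nextStep_le C hneβ hu.1
    rw [rho2_pos C hC1 (lt_trans hζ hξβ), rho2_pos C hC1 hζ, hnext _ hζ]
  · -- non-coherent case
    rw [IsLimitPtOf] at hlp
    push_neg at hlp
    obtain ⟨l₀, hl₀ξ, hl₀⟩ := hlp hξlim.1
    have hξstep : (stepSet C β ξ).Nonempty := stepSet_nonempty C hC1 hξβ
    set η := nextStep C β ξ with hη
    have hηmem : η ∈ stepSet C β ξ := nextStep_mem C hξstep
    have hξη : ξ ≤ η := hηmem.2
    have hηβ : η < β := Dset_lt C hηmem.1
    have hnext : ∀ ζ, l₀ < ζ → ζ < ξ → nextStep C β ζ = η := by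
      intro ζ h1 h2
      have hζβ : ζ < β := lt_trans h2 hξβ
      have hmem : η ∈ stepSet C β ζ := ⟨hηmem.1, le_trans (le_of_lt h2) hξη⟩
      refine nextStep_unique C ⟨η, hmem⟩ hmem (fun w hw => ?_)
      have hwl₀ : l₀ < w := lt_of_lt_of_le h1 hw.2
      have hwξ : ξ ≤ w := hl₀ w hw.1 hwl₀
      exact nextStep_le C hξstep ⟨hw.1, hwξ⟩
    rcases eq_or_lt_of_le hξη with heq | hlt
    · right
      refine ⟨1, l₀, le_rfl, hl₀ξ, fun ζ h1 h2 => ?_⟩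
      rw [rho2_pos C hC1 (lt_trans h2 hξβ), hnext ζ h1 h2, ← heq]
    · rcases IH η hηβ ξ hlt hξlim with ⟨_, heq⟩ | ⟨i, l, hi, hl, hf⟩
      · right
        refine ⟨1, l₀, le_rfl, hl₀ξ, fun ζ h1 h2 => ?_⟩
        rw [rho2_pos C hC1 (lt_trans h2 hξβ), hnext ζ h1 h2, heq ζ h2]
      · right
        refine ⟨i + 1, max l₀ l, by omega, max_lt hl₀ξ hl, fun ζ h1 h2 => ?_⟩
        have h1a : l₀ < ζ := lt_of_le_of_lt (le_max_left _ _) h1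
        have h1b : l < ζ := lt_of_le_of_lt (le_max_right _ _) h1
        rw [rho2_pos C hC1 (lt_trans h2 hξβ), hnext ζ h1a h2, hf ζ h1b h2]
        omega

/-- Coherence of `rho2` : bounded difference below `β ≤ δ`. -/
lemma claimA : ∀ β δ : ι, β ≤ δ →
    ∃ n : ℕ, ∀ ξ, ξ < β → rho2 C ξ β ≤ rho2 C ξ δ + n ∧ rho2 C ξ δ ≤ rho2 C ξ β + n := by
  refine wellFounded_lt.fix ?_
  intro β IH δ hβδ
  rcases eq_or_lt_of_le hβδ with rfl | hlt
  · exact ⟨0, fun ξ _ => ⟨by omega, by omega⟩⟩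
  by_cases hb : ∃ x : ι, x < β
  · by_cases hβlim : IsLimitElem β
    · rcases walkW C hC1 hC2 δ β hlt hβlim with ⟨_, heq⟩ | ⟨i, l, hi, hl, hf⟩
      · exact ⟨0, fun ξ hξ => by rw [heq ξ hξ]; omega⟩
      · -- pick y with l < y < β
        obtain ⟨y, hy1, hy2⟩ := hβlim.2 l hl
        obtain ⟨n₁, hn₁⟩ := IH y hy2 δ (le_of_lt (lt_trans hy2 hlt))
        obtain ⟨n₂, hn₂⟩ := IH y hy2 β (le_of_lt hy2)
        refine ⟨max i (n₁ + n₂), fun ξ hξ => ?_⟩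
        rcases lt_or_ge l ξ with hcase | hcase
        · have := hf ξ hcase hξ
          constructor
          · rw [this]; omega
          · rw [this]
            have : i ≤ max i (n₁+n₂) := le_max_left _ _
            omega
        · have hξy : ξ < y := lt_of_le_of_lt hcase hy1
          have a1 := hn₁ ξ hξy
          have a2 := hn₂ ξ hξy
          have : n₁ + n₂ ≤ max i (n₁ + n₂) := le_max_right _ _
          omega
    · -- successor: the max below β
      obtain ⟨x, hx1, hxmax⟩ := exists_max_below hb.choose_spec hβlim
      have hsing : Dset C β = {x} := Dset_eq_singleton C hx1 hxmax
      have hDβ : ∀ ζ, ζ < β → nextStep C β ζ = x := by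
        intro ζ hζ
        have hxm : x ∈ stepSet C β ζ := by
          refine ⟨?_, hxmax ζ hζ⟩
          rw [hsing]; rfl
        refine nextStep_unique C ⟨x, hxm⟩ hxm (fun w hw => ?_)
        have : w ∈ ({x} : Set ι) := hsing ▸ hw.1
        rw [this]
      have hstep : ∀ ζ, ζ < β → rho2 C ζ β = rho2 C ζ x + 1 := by
        intro ζ hζ
        rw [rho2_pos C hC1 hζ, hDβ ζ hζ]
      obtain ⟨n', hn'⟩ := IH x hx1 δ (le_of_lt (lt_trans hx1 hlt))
      refine ⟨n' + 1 + rho2 C x δ + 1, fun ξ hξ => ?_⟩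
      rcases lt_or_ge ξ x with hc | hc
      · have := hn' ξ hc
        rw [hstep ξ hξ]
        omega
      · have hξx : ξ = x := le_antisymm (hxmax ξ hξ) hc
        subst hξx
        rw [hstep ξ hξ, rho2_zero C (lt_irrefl ξ)]
        omega
  · push_neg at hb
    exact ⟨0, fun ξ hξ => absurd hξ (not_lt.2 (hb ξ))⟩

end withSq

end SqProof
end
noncomputable section
namespace SqProof
open Cardinal Set Classical
set_option linter.unusedSectionVars false
set_option linter.unusedVariables false
set_option maxHeartbeats 1000000

variable {ι : Type} [LinearOrder ι] [WellFoundedLT ι] [Nonempty ι] {θ : Cardinal}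

/-- unbounded subset -/
def Unbdd (B : Set ι) : Prop := ∀ x : ι, ∃ b ∈ B, x < b

lemma unbdd_above (B : Set ι) (hB : Unbdd B) (x y : ι) : ∃ b ∈ B, x < b ∧ y < b := by
  obtain ⟨b, hb1, hb2⟩ := hB (max x y)
  exact ⟨b, hb1, lt_of_le_of_lt (le_max_left _ _) hb2, lt_of_le_of_lt (le_max_right _ _) hb2⟩

variable (C : ι → Set ι)

lemma limPt_limitElem' {B : Set ι} {α : ι} (h : IsLimitPtOf α B) : IsLimitElem α :=
  ⟨h.1, fun x hx => by obtain ⟨y, _, hy1, hy2⟩ := h.2 x hx; exact ⟨y, hy1, hy2⟩⟩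

/-- Strong unboundedness of `rho2` on unbounded sets, from non-threadability. -/
lemma su (hbdd : HB (ι := ι) θ) (hθ : ℵ₀ < θ) (hIio : ∀ x : ι, #(Set.Iio x) < θ)
    (hC1 : ∀ α, IsLimitElem α → IsClubBelow (C α) α)
    (hC2 : ∀ β, IsLimitElem β → ∀ α, IsLimitPtOf α (C β) → C α = C β ∩ Set.Iio α)
    (hC3 : ¬ ∃ D : Set ι, IsClubIn D ∧ ∀ α, IsLimitPtOf α D → C α = D ∩ Set.Iio α)
    {B : Set ι} (hB : Unbdd B) (n : ℕ) :
    ∃ ξ ∈ B, ∃ β ∈ B, ξ < β ∧ n ≤ rho2 C ξ β := by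
  by_contra hcon
  push_neg at hcon
  -- hcon : ∀ ξ ∈ B, ∀ β ∈ B, ξ < β → rho2 C ξ β < n
  set Good : ℕ → Prop := fun m => ∃ B' S' : Set ι, Unbdd B' ∧ IsStationaryIn S' ∧
      (∀ α ∈ S', IsLimitPtOf α B') ∧ (∀ α ∈ S', ∀ ξ ∈ B', ξ < α → rho2 C ξ α ≤ m) with hGoodDef
  -- Step 1 : Good n
  have hΛ : IsClubIn (limPts B) := isClubIn_limPts hbdd hθ hB
  have good_n : Good n := by
    have hstep : ∀ α ∈ limPts B, ∃ l, l < α ∧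
        ∀ ξ ∈ B, l < ξ → ξ < α → rho2 C ξ α ≤ n := by
      intro α hα
      have hαlim := limPt_limitElem' (B := B) hα
      obtain ⟨β, hβB, hαβ⟩ := hB α
      rcases walkW C hC1 hC2 β α hαβ hαlim with ⟨_, heq⟩ | ⟨i, l, hi, hl, hf⟩
      · obtain ⟨x, hx⟩ := hαlim.1
        refine ⟨x, hx, fun ξ hξB hlξ hξα => ?_⟩
        rw [← heq ξ hξα]
        exact le_of_lt (hcon ξ hξB β hβB (lt_trans hξα hαβ))
      · refine ⟨l, hl, fun ξ hξB hlξ hξα => ?_⟩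
        have h1 := hf ξ hlξ hξα
        have h2 := hcon ξ hξB β hβB (lt_trans hξα hαβ)
        omega
    choose! g hg1 hg2 using hstep
    obtain ⟨lam, hstat⟩ := fodor hbdd hθ hIio (club_isStationaryIn hbdd hθ hΛ) hg1
    refine ⟨{ξ | ξ ∈ B ∧ lam < ξ}, {α | α ∈ limPts B ∧ g α = lam}, ?_, hstat, ?_, ?_⟩
    · intro x
      obtain ⟨b, hb1, hb2, hb3⟩ := unbdd_above B hB x lam
      exact ⟨b, ⟨hb1, hb3⟩, hb2⟩
    · rintro α ⟨hα, hgα⟩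
      have hlamα : lam < α := hgα ▸ hg1 α hα
      refine ⟨⟨lam, hlamα⟩, fun x hx => ?_⟩
      obtain ⟨y, hy1, hy2, hy3⟩ := hα.2 (max x lam) (max_lt hx hlamα)
      exact ⟨y, ⟨hy1, lt_of_le_of_lt (le_max_right _ _) hy2⟩,
        lt_of_le_of_lt (le_max_left _ _) hy2, hy3⟩
    · rintro α ⟨hα, hgα⟩ ξ ⟨hξB, hlamξ⟩ hξα
      exact hg2 α hα ξ hξB (hgα ▸ hlamξ) hξα
  have hex : ∃ m, Good m := ⟨n, good_n⟩
  set m := Nat.find hex with hmdef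
  have hm : Good m := Nat.find_spec hex
  have hmin : ∀ k, k < m → ¬ Good k := fun k hk => Nat.find_min hex hk
  obtain ⟨B', S', hB', hS', hlp', hbd'⟩ := hm
  -- m ≥ 1
  have hm1 : 1 ≤ m := by
    by_contra h0
    have hm0 : m = 0 := by omega
    obtain ⟨x0⟩ := ‹Nonempty ι›
    obtain ⟨α, hαS, _⟩ := stat_unbounded hbdd hθ hS' x0
    obtain ⟨x, hx⟩ := (hlp' α hαS).1
    obtain ⟨ξ, hξB, _, hξα⟩ := (hlp' α hαS).2 x hx
    have := hbd' α hαS ξ hξB hξα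
    have := rho2_one_le C hC1 hξα
    omega
  -- Descent or thread
  set T : Set ι := {ξ | ξ ∈ S' ∧ ∃ α ∈ S', ξ < α ∧ ¬ IsLimitPtOf ξ (Dset C α)} with hTdef
  by_cases hT : IsStationaryIn T
  · -- descent
    have hstep2 : ∀ ξ ∈ T, ∃ l, l < ξ ∧
        ∀ ζ ∈ B', l < ζ → ζ < ξ → rho2 C ζ ξ ≤ m - 1 := by
      rintro ξ ⟨hξS, α, hαS, hξα, hnlp⟩
      have hξlim : IsLimitElem ξ := limPt_limitElem' (B := B') (hlp' ξ hξS)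
      rcases walkW C hC1 hC2 α ξ hξα hξlim with ⟨hlp, _⟩ | ⟨i, l, hi, hl, hf⟩
      · exact absurd hlp hnlp
      · refine ⟨l, hl, fun ζ hζB hlζ hζξ => ?_⟩
        have h1 := hf ζ hlζ hζξ
        have h2 := hbd' α hαS ζ hζB (lt_trans hζξ hξα)
        omega
    choose! g2 hg21 hg22 using hstep2
    obtain ⟨lam2, hstat2⟩ := fodor hbdd hθ hIio hT hg21
    refine hmin (m - 1) (by omega) ?_
    refine ⟨{ζ | ζ ∈ B' ∧ lam2 < ζ}, {ξ | ξ ∈ T ∧ g2 ξ = lam2}, ?_, hstat2, ?_, ?_⟩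
    · intro x
      obtain ⟨b, hb1, hb2, hb3⟩ := unbdd_above B' hB' x lam2
      exact ⟨b, ⟨hb1, hb3⟩, hb2⟩
    · rintro ξ ⟨hξT, hgξ⟩
      have hlp := hlp' ξ hξT.1
      have hlamξ : lam2 < ξ := hgξ ▸ hg21 ξ hξT
      refine ⟨⟨lam2, hlamξ⟩, fun x hx => ?_⟩
      obtain ⟨y, hy1, hy2, hy3⟩ := hlp.2 (max x lam2) (max_lt hx hlamξ)
      exact ⟨y, ⟨hy1, lt_of_le_of_lt (le_max_right _ _) hy2⟩,
        lt_of_le_of_lt (le_max_left _ _) hy2, hy3⟩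
    · rintro ξ ⟨hξT, hgξ⟩ ζ ⟨hζB, hlamζ⟩ hζξ
      exact hg22 ξ hξT ζ hζB (hgξ ▸ hlamζ) hζξ
  · -- thread
    rw [IsStationaryIn] at hT
    push_neg at hT
    obtain ⟨F, hF, hTF⟩ := hT
    have hTF' : T ∩ F = ∅ := hTF
    set Sg : Set ι := S' ∩ F with hSgdef
    have hSgstat : IsStationaryIn Sg := stat_inter_club hbdd hθ hS' hF
    have hSglim : ∀ α ∈ Sg, IsLimitElem α := fun α hα =>
      limPt_limitElem' (B := B') (hlp' α hα.1)
    have hcoh : ∀ ξ ∈ Sg, ∀ α ∈ Sg, ξ < α → C ξ = C α ∩ Set.Iio ξ := by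
      intro ξ hξ α hα hξα
      have hξnT : ξ ∉ T := fun hmem => by
        have : ξ ∈ T ∩ F := ⟨hmem, hξ.2⟩
        rw [hTF'] at this
        exact this
      have hlpD : IsLimitPtOf ξ (Dset C α) := by
        by_contra hc
        exact hξnT ⟨hξ.1, α, hα.1, hξα, hc⟩
      have hαlim := hSglim α hα
      have hlpC : IsLimitPtOf ξ (C α) := by
        refine ⟨hlpD.1, fun x hx => ?_⟩
        obtain ⟨y, hy, hy1, hy2⟩ := hlpD.2 x hx
        rw [Dset, if_pos hαlim] at hy
        exact ⟨y, hy.1, hy1, hy2⟩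
      exact hC2 α hαlim ξ hlpC
    -- the union is a thread
    set Dthr : Set ι := ⋃ α ∈ Sg, C α with hDdef
    have hsubIio : ∀ α ∈ Sg, C α ⊆ Set.Iio α := fun α hα => (hC1 α (hSglim α hα)).1
    have hinc : ∀ α ∈ Sg, ∀ γ, γ ≤ α → Dthr ∩ Set.Iio γ = C α ∩ Set.Iio γ := by
      intro α hα γ hγα
      ext z
      constructor
      · rintro ⟨hz, hzγ⟩
        simp only [hDdef, Set.mem_iUnion] at hz
        obtain ⟨α', hα', hzα'⟩ := hz
        rcases lt_trichotomy α' α with h | h | h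
        · have := hcoh α' hα' α hα h
          rw [this] at hzα'
          exact ⟨hzα'.1, hzγ⟩
        · subst h; exact ⟨hzα', hzγ⟩
        · have := hcoh α hα α' hα' h
          rw [this]
          exact ⟨⟨hzα', lt_of_lt_of_le hzγ hγα⟩, hzγ⟩
      · rintro ⟨hz, hzγ⟩
        refine ⟨?_, hzγ⟩
        simp only [hDdef, Set.mem_iUnion]
        exact ⟨α, hα, hz⟩
    have hclub : IsClubIn Dthr := by
      constructor
      · intro x
        obtain ⟨α, hαSg, hxα⟩ := stat_unbounded hbdd hθ hSgstat x
        obtain ⟨y, hy1, hy2⟩ := (hC1 α (hSglim α hαSg)).2.1 x hxα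
        refine ⟨y, ?_, hy2⟩
        simp only [hDdef, Set.mem_iUnion]
        exact ⟨α, hαSg, hy1⟩
      · intro s hs hne y hy
        obtain ⟨α, hαSg, hyα⟩ := stat_unbounded hbdd hθ hSgstat y
        have hsub : s ⊆ C α := by
          intro z hz
          have hzD := hs hz
          have hzy : z ≤ y := hy.1 hz
          have hzα : z < α := lt_of_le_of_lt hzy hyα
          have : z ∈ Dthr ∩ Set.Iio α := ⟨hzD, hzα⟩
          rw [hinc α hαSg α le_rfl] at this
          exact this.1
        have := (hC1 α (hSglim α hαSg)).2.2 s hsub hne y hyα hy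
        simp only [hDdef, Set.mem_iUnion]
        exact ⟨α, hαSg, this⟩
    refine hC3 ⟨Dthr, hclub, fun γ hγ => ?_⟩
    obtain ⟨α, hαSg, hγα⟩ := stat_unbounded hbdd hθ hSgstat γ
    have hDγ : Dthr ∩ Set.Iio γ = C α ∩ Set.Iio γ := hinc α hαSg γ (le_of_lt hγα)
    have hlpα : IsLimitPtOf γ (C α) := by
      refine ⟨hγ.1, fun x hx => ?_⟩
      obtain ⟨y, hyD, hy1, hy2⟩ := hγ.2 x hx
      have : y ∈ C α ∩ Set.Iio γ := by rw [← hDγ]; exact ⟨hyD, hy2⟩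
      exact ⟨y, this.1, hy1, hy2⟩
    rw [hC2 α (hSglim α hαSg) γ hlpα, hDγ]

end SqProof
end
noncomputable section
namespace SqProof
open Cardinal Set Classical TopologicalSpace Topology
set_option linter.unusedSectionVars false
set_option linter.unusedVariables false
set_option maxHeartbeats 1000000

variable {ι : Type} [LinearOrder ι]

/-- basic neighborhoods of the axis points -/
def Nbhd (c : ι → ι → ℕ) (α : ι) (k : ℕ) : Set ((ι × ι) ⊕ ι) :=
  {x | x = Sum.inr α ∨ ∃ p : ι × ι, x = Sum.inl p ∧ p.1 < p.2 ∧ (α = p.1 ∨ α = p.2) ∧ k ≤ c p.1 p.2}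

lemma mem_nbhd_self (c : ι → ι → ℕ) (α : ι) (k : ℕ) : Sum.inr α ∈ Nbhd c α k := Or.inl rfl

lemma nbhd_anti (c : ι → ι → ℕ) (α : ι) {k k' : ℕ} (h : k ≤ k') :
    Nbhd c α k' ⊆ Nbhd c α k := by
  rintro x (hx | ⟨p, hp1, hp2, hp3, hp4⟩)
  · exact Or.inl hx
  · exact Or.inr ⟨p, hp1, hp2, hp3, le_trans h hp4⟩

lemma inr_mem_nbhd {c : ι → ι → ℕ} {α γ : ι} {k : ℕ} (h : Sum.inr γ ∈ Nbhd c α k) : γ = α := by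
  rcases h with h | ⟨p, hp, _⟩
  · exact Sum.inr_injective h
  · exact absurd hp (by simp)

lemma inl_mem_nbhd {c : ι → ι → ℕ} {α : ι} {q : ι × ι} {k : ℕ} (h : Sum.inl q ∈ Nbhd c α k) :
    q.1 < q.2 ∧ (α = q.1 ∨ α = q.2) ∧ k ≤ c q.1 q.2 := by
  rcases h with h | ⟨p, hp, h2, h3, h4⟩
  · exact absurd h (by simp)
  · obtain rfl : q = p := Sum.inl_injective hp
    exact ⟨h2, h3, h4⟩

/-- the topology on the ladder space -/
def spaceTop (c : ι → ι → ℕ) : TopologicalSpace ((ι × ι) ⊕ ι) where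
  IsOpen U := ∀ α : ι, Sum.inr α ∈ U → ∃ k, Nbhd c α k ⊆ U
  isOpen_univ := fun α _ => ⟨0, fun x _ => trivial⟩
  isOpen_inter := by
    intro U V hU hV α hα
    obtain ⟨k1, h1⟩ := hU α hα.1
    obtain ⟨k2, h2⟩ := hV α hα.2
    exact ⟨max k1 k2, fun x hx =>
      ⟨h1 (nbhd_anti c α (le_max_left _ _) hx), h2 (nbhd_anti c α (le_max_right _ _) hx)⟩⟩
  isOpen_sUnion := by
    intro S hS α hα
    obtain ⟨U, hU, hαU⟩ := hα
    obtain ⟨k, hk⟩ := hS U hU α hαU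
    exact ⟨k, fun x hx => ⟨U, hU, hk hx⟩⟩

variable (c : ι → ι → ℕ)

lemma isOpen_iff' {U : Set ((ι × ι) ⊕ ι)} :
    @IsOpen _ (spaceTop c) U ↔ ∀ α : ι, Sum.inr α ∈ U → ∃ k, Nbhd c α k ⊆ U := Iff.rfl

lemma isOpen_nbhd (α : ι) (k : ℕ) : @IsOpen _ (spaceTop c) (Nbhd c α k) := by
  intro γ hγ
  obtain rfl := inr_mem_nbhd hγ
  exact ⟨k, le_refl _⟩

lemma isOpen_singleton_inl (p : ι × ι) : @IsOpen _ (spaceTop c) {Sum.inl p} := by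
  intro γ hγ
  exact absurd hγ (by simp)

lemma mem_nhds_inr {s : Set ((ι × ι) ⊕ ι)} {α : ι} :
    s ∈ @nhds _ (spaceTop c) (Sum.inr α) ↔ ∃ k, Nbhd c α k ⊆ s := by
  letI := spaceTop c
  rw [mem_nhds_iff]
  constructor
  · rintro ⟨V, hVs, hV, hmem⟩
    obtain ⟨k, hk⟩ := hV α hmem
    exact ⟨k, hk.trans hVs⟩
  · rintro ⟨k, hk⟩
    exact ⟨Nbhd c α k, hk, isOpen_nbhd c α k, mem_nbhd_self c α k⟩

lemma mem_nhds_inl {s : Set ((ι × ι) ⊕ ι)} {p : ι × ι} :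
    s ∈ @nhds _ (spaceTop c) (Sum.inl p) ↔ Sum.inl p ∈ s := by
  letI := spaceTop c
  rw [mem_nhds_iff]
  constructor
  · rintro ⟨V, hVs, hV, hmem⟩
    exact hVs hmem
  · intro h
    exact ⟨{Sum.inl p}, by simpa using h, isOpen_singleton_inl c p, rfl⟩

lemma firstCountable : @FirstCountableTopology _ (spaceTop c) := by
  letI := spaceTop c
  constructor
  intro x
  cases x with
  | inl p =>
    have hb : (𝓝 (Sum.inl p : (ι × ι) ⊕ ι)).HasBasis (fun _ : ℕ => True) (fun _ => {Sum.inl p}) := by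
      refine ⟨fun t => ?_⟩
      rw [mem_nhds_inl]
      simp [Set.singleton_subset_iff]
    exact hb.isCountablyGenerated
  | inr α =>
    have hb : (𝓝 (Sum.inr α : (ι × ι) ⊕ ι)).HasBasis (fun _ : ℕ => True) (fun k => Nbhd c α k) := by
      refine ⟨fun t => ?_⟩
      rw [mem_nhds_inr]
      simp
    exact hb.isCountablyGenerated

lemma isClosed_singleton_inl (p : ι × ι) : @IsClosed _ (spaceTop c) {Sum.inl p} := by
  letI := spaceTop c
  rw [← isOpen_compl_iff]
  intro γ hγ
  refine ⟨c p.1 p.2 + 1, fun x hx hxp => ?_⟩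
  obtain rfl : x = Sum.inl p := hxp
  have := inl_mem_nbhd hx
  omega

lemma isClosed_nbhd (α : ι) (k : ℕ) : @IsClosed _ (spaceTop c) (Nbhd c α k) := by
  letI := spaceTop c
  rw [← isOpen_compl_iff]
  intro γ hγ
  have hγα : γ ≠ α := fun h => hγ (h ▸ mem_nbhd_self c α k)
  refine ⟨max (c α γ) (c γ α) + 1, fun x hx hxN => ?_⟩
  cases x with
  | inr d =>
    obtain rfl := inr_mem_nbhd hxN
    exact hγα (inr_mem_nbhd hx).symm
  | inl q =>
    obtain ⟨h1, h2, h3⟩ := inl_mem_nbhd hx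
    obtain ⟨h1', h2', h3'⟩ := inl_mem_nbhd hxN
    have hmax1 : c α γ ≤ max (c α γ) (c γ α) := le_max_left _ _
    have hmax2 : c γ α ≤ max (c α γ) (c γ α) := le_max_right _ _
    rcases h2 with hγq | hγq <;> rcases h2' with hαq | hαq
    · exact hγα (hγq.trans hαq.symm)
    · rw [← hγq, ← hαq] at h3
      omega
    · rw [← hγq, ← hαq] at h3
      omega
    · exact hγα (hγq.trans hαq.symm)
  
end SqProof
end
noncomputable section
namespace SqProof
open Cardinal Set Classical TopologicalSpace Topology
set_option linter.unusedSectionVars false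
set_option linter.unusedVariables false
set_option maxHeartbeats 1000000

variable {ι : Type} [LinearOrder ι] (c : ι → ι → ℕ)

lemma zeroDim : @ZeroDimensional _ (spaceTop c) := by
  letI := spaceTop c
  refine ⟨{U | (∃ p, U = {Sum.inl p}) ∨ ∃ α k, U = Nbhd c α k}, ?_, ?_⟩
  · refine isTopologicalBasis_of_isOpen_of_nhds ?_ ?_
    · rintro U (⟨p, rfl⟩ | ⟨α, k, rfl⟩)
      · exact isOpen_singleton_inl c p
      · exact isOpen_nbhd c α k
    · intro a u ha hu
      cases a with
      | inl p => exact ⟨{Sum.inl p}, Or.inl ⟨p, rfl⟩, rfl, by simpa using ha⟩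
      | inr α =>
        obtain ⟨k, hk⟩ := hu α ha
        exact ⟨Nbhd c α k, Or.inr ⟨α, k, rfl⟩, mem_nbhd_self c α k, hk⟩
  · rintro U (⟨p, rfl⟩ | ⟨α, k, rfl⟩)
    · exact ⟨isClosed_singleton_inl c p, isOpen_singleton_inl c p⟩
    · exact ⟨isClosed_nbhd c α k, isOpen_nbhd c α k⟩

lemma isClosed_axis : @IsClosed _ (spaceTop c) (Set.range Sum.inr) := by
  letI := spaceTop c
  rw [← isOpen_compl_iff]
  intro γ hγ
  exact absurd ⟨γ, rfl⟩ hγ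

lemma discrete_axis : @DiscreteTopology _
    (@instTopologicalSpaceSubtype _ (· ∈ Set.range (Sum.inr : ι → (ι × ι) ⊕ ι)) (spaceTop c)) := by
  letI := spaceTop c
  rw [discreteTopology_iff_isOpen_singleton]
  rintro ⟨x, hx⟩
  obtain ⟨α, rfl⟩ := hx
  rw [isOpen_induced_iff]
  refine ⟨Nbhd c α 0, isOpen_nbhd c α 0, ?_⟩
  ext ⟨y, hy⟩
  obtain ⟨γ, rfl⟩ := hy
  simp only [Set.mem_preimage, Set.mem_singleton_iff, Subtype.mk.injEq]
  constructor
  · intro h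
    rw [inr_mem_nbhd h]
  · intro h
    have hh : γ = α := Sum.inr_injective (congrArg Subtype.val h)
    rw [hh]
    exact mem_nbhd_self c α 0

/-- membership extraction for discrete closed subsets -/
lemma exists_discrete_index {A : Set ((ι × ι) ⊕ ι)}
    (hA : @DiscreteTopology _ (@instTopologicalSpaceSubtype _ (· ∈ A) (spaceTop c)))
    {α : ι} (hα : Sum.inr α ∈ A) :
    ∃ k, ∀ x ∈ A, x ∈ Nbhd c α k → x = Sum.inr α := by
  letI := spaceTop c
  haveI := hA
  have hopen : IsOpen {(⟨Sum.inr α, hα⟩ : A)} := isOpen_discrete _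
  rw [isOpen_induced_iff] at hopen
  obtain ⟨U, hU, hUeq⟩ := hopen
  have hmemU : Sum.inr α ∈ U := by
    have : (⟨Sum.inr α, hα⟩ : A) ∈ (Subtype.val ⁻¹' U : Set A) := by
      rw [hUeq]; rfl
    exact this
  obtain ⟨k, hk⟩ := hU α hmemU
  refine ⟨k, fun x hxA hxN => ?_⟩
  have : (⟨x, hxA⟩ : A) ∈ (Subtype.val ⁻¹' U : Set A) := hk hxN
  rw [hUeq] at this
  simpa using this

end SqProof
end
noncomputable section
namespace SqProof
open Cardinal Set Classical TopologicalSpace Topology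
set_option linter.unusedSectionVars false
set_option linter.unusedVariables false
set_option maxHeartbeats 1000000

variable {ι : Type} [LinearOrder ι] [WellFoundedLT ι] [Nonempty ι] {θ : Cardinal}
variable (C : ι → Set ι)

lemma cwhlt (hbdd : HB (ι := ι) θ) (hθ : ℵ₀ < θ)
    (hC1 : ∀ α, IsLimitElem α → IsClubBelow (C α) α)
    (hC2 : ∀ β, IsLimitElem β → ∀ α, IsLimitPtOf α (C β) → C α = C β ∩ Set.Iio α) :
    @CwHLt ((ι × ι) ⊕ ι) (spaceTop (rho2 C)) θ := by
  letI := spaceTop (rho2 C)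
  intro A hA hcard
  have hdisc := hA.2
  set B0 : Set ι := {α | Sum.inr α ∈ A} with hB0
  have hB0card : #B0 < θ := by
    refine lt_of_le_of_lt (mk_le_of_injective (f := fun x : B0 => (⟨Sum.inr x.1, x.2⟩ : A)) ?_) hcard
    intro a b hab
    simp only [Subtype.mk.injEq] at hab
    exact Subtype.ext (Sum.inr_injective hab)
  obtain ⟨δ, hδ⟩ := hbdd B0 hB0card
  have hcl : ∀ β : ι, ∃ n : ℕ, β < δ → ∀ ξ, ξ < β →
      rho2 C ξ β ≤ rho2 C ξ δ + n ∧ rho2 C ξ δ ≤ rho2 C ξ β + n := by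
    intro β
    by_cases h : β < δ
    · obtain ⟨n, hn⟩ := claimA C hC1 hC2 β δ (le_of_lt h)
      exact ⟨n, fun _ => hn⟩
    · exact ⟨0, fun hh => absurd hh h⟩
  choose nb hnb using hcl
  set mf : ι → ℕ := fun γ => 2 * rho2 C γ δ + 2 * nb γ + 2 with hmf
  have hdich : ∀ ξ β, ξ < β → β < δ → rho2 C ξ β < mf ξ ∨ rho2 C ξ β < mf β := by
    intro ξ β hξβ hβδ
    by_cases h : rho2 C ξ β < mf ξ
    · exact Or.inl h
    · right
      simp only [not_lt] at h
      have hx : mf ξ = 2 * rho2 C ξ δ + 2 * nb ξ + 2 := rfl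
      have hbx : mf β = 2 * rho2 C β δ + 2 * nb β + 2 := rfl
      rw [hx] at h
      rw [hbx]
      have h2 := (hnb β hβδ ξ hξβ).1
      omega
  have hkd : ∀ α : ι, ∃ k : ℕ, Sum.inr α ∈ A → ∀ x ∈ A, x ∈ Nbhd (rho2 C) α k → x = Sum.inr α := by
    intro α
    by_cases h : Sum.inr α ∈ A
    · obtain ⟨k, hk⟩ := exists_discrete_index (rho2 C) hdisc h
      exact ⟨k, fun _ => hk⟩
    · exact ⟨0, fun hh => absurd hh h⟩
  choose kd hkdspec using hkd
  set K : ι → ℕ := fun α => max (mf α) (kd α) with hK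
  refine ⟨Sum.elim (fun p => {Sum.inl p}) (fun α => Nbhd (rho2 C) α (K α)), ?_, ?_, ?_⟩
  · rintro (p | α) hx
    · exact isOpen_singleton_inl _ p
    · exact isOpen_nbhd _ α (K α)
  · rintro (p | α) hx
    · rfl
    · exact mem_nbhd_self _ α (K α)
  · rintro (p | α) hx (q | β) hy hxy
    · simp only [Sum.elim_inl]
      exact Set.disjoint_singleton.mpr hxy
    · simp only [Sum.elim_inl, Sum.elim_inr]
      rw [Set.disjoint_left]
      rintro z hz1 hz2
      rw [Set.mem_singleton_iff] at hz1
      subst hz1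
      have hz2' : Sum.inl p ∈ Nbhd (rho2 C) β (kd β) :=
        nbhd_anti _ β (le_max_right _ _) hz2
      exact absurd (hkdspec β hy _ hx hz2') (by simp)
    · simp only [Sum.elim_inl, Sum.elim_inr]
      rw [Set.disjoint_right]
      rintro z hz1 hz2
      rw [Set.mem_singleton_iff] at hz1
      subst hz1
      have hz2' : Sum.inl q ∈ Nbhd (rho2 C) α (kd α) :=
        nbhd_anti _ α (le_max_right _ _) hz2
      exact absurd (hkdspec α hx _ hy hz2') (by simp)
    · simp only [Sum.elim_inr]
      have hαβ : α ≠ β := fun h => hxy (h ▸ rfl)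
      rw [Set.disjoint_left]
      rintro z hz1 hz2
      cases z with
      | inr d =>
        have h1 : d = α := inr_mem_nbhd hz1
        have h2 : d = β := inr_mem_nbhd hz2
        exact hαβ (h1 ▸ h2 ▸ rfl)
      | inl w =>
        obtain ⟨hw1, hw2, hw3⟩ := inl_mem_nbhd hz1
        obtain ⟨hw1', hw2', hw3'⟩ := inl_mem_nbhd hz2
        have hmfKα : mf α ≤ K α := le_max_left _ _
        have hmfKβ : mf β ≤ K β := le_max_left _ _
        have hαδ : α < δ := hδ α hx
        have hβδ : β < δ := hδ β hy
        obtain ⟨r, hr⟩ : ∃ r, r = rho2 C w.1 w.2 := ⟨_, rfl⟩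
        rw [← hr] at hw3 hw3'
        rcases hw2 with hw2 | hw2 <;> rcases hw2' with hw2' | hw2'
        · exact hαβ (hw2.trans hw2'.symm)
        · rcases hdich w.1 w.2 hw1 (hw2' ▸ hβδ) with h | h
          · rw [← hr, ← hw2] at h
            omega
          · rw [← hr, ← hw2'] at h
            omega
        · rcases hdich w.1 w.2 hw1 (hw2 ▸ hαδ) with h | h
          · rw [← hr, ← hw2'] at h
            omega
          · rw [← hr, ← hw2] at h
            omega
        · exact hαβ (hw2.trans hw2'.symm)

lemma notweak (hbdd : HB (ι := ι) θ) (hθ : ℵ₀ < θ) (hIio : ∀ x : ι, #(Set.Iio x) < θ)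
    (hcard : #ι = θ)
    (hC1 : ∀ α, IsLimitElem α → IsClubBelow (C α) α)
    (hC2 : ∀ β, IsLimitElem β → ∀ α, IsLimitPtOf α (C β) → C α = C β ∩ Set.Iio α)
    (hC3 : ¬ ∃ D : Set ι, IsClubIn D ∧ ∀ α, IsLimitPtOf α D → C α = D ∩ Set.Iio α) :
    ¬ @WeaklyCwH ((ι × ι) ⊕ ι) (spaceTop (rho2 C)) θ := by
  letI := spaceTop (rho2 C)
  intro hW
  have hAcd : IsClosedDiscreteSet (Set.range (Sum.inr : ι → (ι × ι) ⊕ ι)) :=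
    ⟨isClosed_axis (rho2 C), discrete_axis (rho2 C)⟩
  have hAcard : #(Set.range (Sum.inr : ι → (ι × ι) ⊕ ι)) = θ := by
    rw [mk_range_eq _ Sum.inr_injective]
    exact hcard
  obtain ⟨B, hBsub, hBcard, U, hU1, hU2, hU3⟩ := hW _ hAcd hAcard
  set B0 : Set ι := {α | Sum.inr α ∈ B} with hB0
  have hBeq : B = Sum.inr '' B0 := by
    ext x
    constructor
    · intro hx
      obtain ⟨γ, rfl⟩ := hBsub hx
      exact ⟨γ, hx, rfl⟩
    · rintro ⟨γ, hγ, rfl⟩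
      exact hγ
  have hB0card : #B0 = θ := by
    rw [hBeq, mk_image_eq Sum.inr_injective] at hBcard
    exact hBcard
  have hB0un : Unbdd B0 := by
    intro x
    by_contra hc
    push_neg at hc
    obtain ⟨z, hz⟩ := hbdd.exists_gt hθ x
    have hsub : B0 ⊆ Set.Iio z := fun b hb => lt_of_le_of_lt (hc b hb) hz
    exact absurd (hB0card ▸ mk_le_mk_of_subset hsub) (not_le.2 (hIio z))
  have hkex : ∀ α : ι, ∃ k : ℕ, Sum.inr α ∈ B → Nbhd (rho2 C) α k ⊆ U (Sum.inr α) := by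
    intro α
    by_cases h : Sum.inr α ∈ B
    · obtain ⟨k, hk⟩ := (hU1 _ h) α (hU2 _ h)
      exact ⟨k, fun _ => hk⟩
    · exact ⟨0, fun hh => absurd hh h⟩
  choose k hkspec using hkex
  have hfib : ∃ n, Unbdd {α | α ∈ B0 ∧ k α = n} := by
    by_contra hcc
    push_neg at hcc
    have hbound : ∀ n : ℕ, ∃ x, ∀ b ∈ {α | α ∈ B0 ∧ k α = n}, b ≤ x := by
      intro n
      have := hcc n
      rw [Unbdd] at this
      push_neg at this
      obtain ⟨x, hx⟩ := this
      exact ⟨x, fun b hb => hx b hb⟩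
    choose z hz using hbound
    obtain ⟨w, hw⟩ := hbdd.countable_bdd hθ z
    obtain ⟨b, hbB0, hbw⟩ := hB0un w
    have : b ≤ z (k b) := hz (k b) b ⟨hbB0, rfl⟩
    exact absurd (lt_of_le_of_lt this (hw (k b))) (not_lt.2 (le_of_lt hbw))
  obtain ⟨n0, hfib⟩ := hfib
  obtain ⟨ξ, hξ, β, hβ, hξβ, hrh⟩ := su C hbdd hθ hIio hC1 hC2 hC3 hfib n0
  have hξB : Sum.inr ξ ∈ B := hξ.1
  have hβB : Sum.inr β ∈ B := hβ.1
  have hz1 : Sum.inl (ξ, β) ∈ Nbhd (rho2 C) ξ n0 :=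
    Or.inr ⟨(ξ, β), rfl, hξβ, Or.inl rfl, hrh⟩
  have hz2 : Sum.inl (ξ, β) ∈ Nbhd (rho2 C) β n0 :=
    Or.inr ⟨(ξ, β), rfl, hξβ, Or.inr rfl, hrh⟩
  have hd := hU3 _ hξB _ hβB (fun h => absurd (Sum.inr_injective h) (ne_of_lt hξβ))
  have hm1 : Sum.inl (ξ, β) ∈ U (Sum.inr ξ) := hkspec ξ hξB (hξ.2 ▸ hz1)
  have hm2 : Sum.inl (ξ, β) ∈ U (Sum.inr β) := hkspec β hβB (hβ.2 ▸ hz2)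
  exact Set.disjoint_left.mp hd hm1 hm2

end SqProof
end
/-- Theorem 3: If `θ` is regular uncountable and `□(θ)` holds, then there is
a zero-dimensional, first countable, `<θ`-cwH space that is not weakly `θ`-cwH. -/
theorem statement7 (θ : Cardinal) (hreg : θ.IsRegular) (hθ : ℵ₀ < θ)
    (hsq : SquareTheta θ.ord.ToType) :
    ∃ (X : Type) (t : TopologicalSpace X),
      @FirstCountableTopology X t ∧ @ZeroDimensional X t ∧
        @CwHLt X t θ ∧ ¬ @WeaklyCwH X t θ := by
  classical
  haveI hne : Nonempty θ.ord.ToType := by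
    rw [Ordinal.toType_nonempty_iff_ne_zero]
    exact hreg.ord_pos.ne'
  have hbdd : SqProof.HB (ι := θ.ord.ToType) θ := by
    intro s hs
    by_contra hc
    push_neg at hc
    have hunb : IsCofinal s := by
      intro a
      obtain ⟨x, hx1, hx2⟩ := hc a
      exact ⟨x, hx1, hx2⟩
    have h2 := Order.cof_le hunb
    rw [Ordinal.cof_toType, hreg.cof_ord] at h2
    exact absurd hs (not_lt.2 h2)
  have hIio : ∀ x : θ.ord.ToType, #(Set.Iio x) < θ := fun x => Cardinal.mk_Iio_ord_toType x
  have hcard : #θ.ord.ToType = θ := by rw [Cardinal.mk_toType, Cardinal.card_ord]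
  obtain ⟨C, hC1, hC2, hC3⟩ := hsq
  exact ⟨(θ.ord.ToType × θ.ord.ToType) ⊕ θ.ord.ToType, SqProof.spaceTop (SqProof.rho2 C),
    SqProof.firstCountable _, SqProof.zeroDim _,
    SqProof.cwhlt C hbdd hθ hC1 hC2,
    SqProof.notweak C hbdd hθ hIio hcard hC1 hC2 hC3⟩
end

section
/- Let θ be a regular uncountable cardinal and let {h_β : β < θ} be a family with h_β : β → ω such that (1) for all α < β < θ there is n ∈ ω with h_α(ξ) < h_β(ξ) + n for all ξ < α, and (2) for every B ⊆ θ of cardinality θ and every n ∈ ω there are α < β in B with h_β(α) > n. For α < β < θ define H_{αβ} = {(n,m) ∈ ω × ω : n + m ≤ h_β(α)}. Then each H_{αβ} is a finite closed-downward subset of ω × ω, and the family ℋ = {H_{αβ} : α < β < θ} satisfies: (a) for every A ⊆ θ with |A| < θ there is f : θ → ω with (f(α),f(β)) ∉ H_{αβ} for all α < β in A, and (b) for every B ⊆ θ of cardinality θ and every f : θ → ω there are α < β in B with (f(α),f(β)) ∈ H_{αβ}. -/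
open Cardinal Set TopologicalSpace

/-- From a family `{h_β}` satisfying monotonicity (1) and unboundedness (2),
the sets `H_{αβ} = {(n,m) : n + m ≤ h_β(α)}` are finite, c.d.w., and satisfy (a) and (b). -/
theorem statement8 (θ : Cardinal) (hreg : θ.IsRegular) (hθ : ℵ₀ < θ)
    (h : θ.ord.ToType → θ.ord.ToType → ℕ)
    (h1 : ∀ α β : θ.ord.ToType, α < β → ∃ n : ℕ, ∀ ξ < α, h α ξ < h β ξ + n)
    (h2 : ∀ B : Set θ.ord.ToType, #B = θ → ∀ n : ℕ,
      ∃ α ∈ B, ∃ β ∈ B, α < β ∧ n < h β α) :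
    (∀ α β : θ.ord.ToType, α < β →
      ({p : ℕ × ℕ | p.1 + p.2 ≤ h β α}).Finite ∧ IsCDW {p : ℕ × ℕ | p.1 + p.2 ≤ h β α}) ∧
    (∀ A : Set θ.ord.ToType, #A < θ →
      ∃ f : θ.ord.ToType → ℕ, ∀ α ∈ A, ∀ β ∈ A, α < β →
        (f α, f β) ∉ {p : ℕ × ℕ | p.1 + p.2 ≤ h β α}) ∧
    (∀ B : Set θ.ord.ToType, #B = θ → ∀ f : θ.ord.ToType → ℕ,
      ∃ α ∈ B, ∃ β ∈ B, α < β ∧ (f α, f β) ∈ {p : ℕ × ℕ | p.1 + p.2 ≤ h β α}) := by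
  
  refine ⟨?_, ?_, ?_⟩
  · -- finiteness and cdw
    intro α β hαβ
    constructor
    · apply Set.Finite.subset (Set.finite_Icc ((0:ℕ),(0:ℕ)) (h β α, h β α))
      rintro ⟨n, m⟩ hp
      simp only [Set.mem_setOf_eq] at hp
      simp [Prod.le_def]; omega
    · rintro ⟨n, m⟩ hp ⟨n', m'⟩ h1' h2'
      simp only [Set.mem_setOf_eq] at *
      omega
  · -- (a)
    intro A hA
    -- A is bounded strictly above
    have hbdd : ∃ β : θ.ord.ToType, ∀ α ∈ A, α < β := by
      by_contra hcon
      push_neg at hcon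
      have hub : Set.Unbounded (· < ·) A := by
        intro a
        obtain ⟨b, hb, hab⟩ := hcon a
        exact ⟨b, hb, not_lt.mpr hab⟩
      haveI : IsWellOrder θ.ord.ToType (· < ·) := isWellOrder_lt
      have := Order.cof_le (s := A) (fun a => hcon a)
      rw [Ordinal.cof_toType, hreg.cof_eq] at this
      exact absurd hA (not_lt.mpr this)
    obtain ⟨β', hβ'⟩ := hbdd
    classical
    choose n hn using fun (γ : θ.ord.ToType) (hγ : γ < β') => h1 γ β' hγ
    refine ⟨fun γ => if hγ : γ < β' then h β' γ + n γ hγ else 0, ?_⟩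
    intro α hα β hβ hαβ hmem
    simp only [Set.mem_setOf_eq] at hmem
    have hαβ' : α < β' := hβ' α hα
    have hββ' : β < β' := hβ' β hβ
    rw [dif_pos hαβ', dif_pos hββ'] at hmem
    have := hn β hββ' α hαβ
    omega
  · -- (b)
    intro B hB f
    -- find a fiber of f on B of size θ
    have hfib : ∃ k : ℕ, #({β ∈ B | f β = k}) = θ := by
      by_contra hcon
      push_neg at hcon
      have hlt : ∀ k : ULift.{u_1} ℕ, #({β ∈ B | f β = k.down}) < θ := by
        intro k
        refine lt_of_le_of_ne ?_ (hcon k.down)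
        exact (Cardinal.mk_le_mk_of_subset (fun x hx => hx.1)).trans_eq hB
      have hcover : B ⊆ ⋃ k : ULift.{u_1} ℕ, {β ∈ B | f β = k.down} := by
        intro x hx
        exact Set.mem_iUnion.mpr ⟨⟨f x⟩, hx, rfl⟩
      have hle : #B ≤ Cardinal.sum fun k : ULift.{u_1} ℕ => #({β ∈ B | f β = k.down}) :=
        le_trans (Cardinal.mk_le_mk_of_subset hcover) Cardinal.mk_iUnion_le_sum_mk
      have hsum := Cardinal.sum_lt_of_isRegular hreg
        (by simpa using hθ) hlt
      rw [hB] at hle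
      exact absurd (lt_of_le_of_lt hle hsum) (lt_irrefl θ)
    obtain ⟨k, hk⟩ := hfib
    obtain ⟨α, hα, β, hβ, hαβ, hbig⟩ := h2 _ hk (2 * k)
    refine ⟨α, hα.1, β, hβ.1, hαβ, ?_⟩
    simp only [Set.mem_setOf_eq]
    rw [hα.2, hβ.2]
    omega
end

section
/- Let θ be a regular uncountable cardinal and let E ⊆ {α < θ : cf(α) = ω} be a non-reflecting stationary set. Then there is a θ-family {h_β : β < θ} such that for every A ⊆ θ, the family {h_β : β ∈ A} is weakly bounded if and only if A ∩ E is non-stationary in θ. In particular, {h_β : β < θ} is a non-extendible initially weakly bounded θ-family. -/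
open Cardinal Set TopologicalSpace

/-! ### Auxiliary machinery for Statement 9 -/

section Statement9Aux

open Classical

variable {ι : Type} [LinearOrder ι] [WellFoundedLT ι]

/-- The minimum of a nonempty subset of a well-ordered type. -/
private noncomputable def wmin (s : Set ι) (hs : s.Nonempty) : ι :=
  (IsWellFounded.wf (r := ((· < ·) : ι → ι → Prop))).min s hs

private lemma wmin_mem (s : Set ι) (hs : s.Nonempty) : wmin s hs ∈ s :=
  WellFounded.min_mem _ s hs

private lemma wmin_le {s : Set ι} (hs : s.Nonempty) {y : ι} (hy : y ∈ s) :
    wmin s hs ≤ y :=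
  not_lt.1 (WellFounded.not_lt_min _ s hy)

/-- The gluing lemma: if `h β` is monotone below `β`, `c` is a set which is "closed"
below `β`, does not contain `β`, has an element above `β`, and for each `δ ∈ c` above `β`
the function `G δ` weakly bounds `h β`, then the function `ξ ↦ G (ν ξ) ξ` (where `ν ξ`
is the least element of `c` above `ξ`) weakly bounds `h β`. -/
private lemma glue_bound (h : ι → ι → ℕ) (β : ι) (c : Set ι) (ν : ι → ι) (G : ι → ι → ℕ)
    (hmono : ∀ ξ ξ', ξ ≤ ξ' → ξ' < β → h β ξ ≤ h β ξ')
    (hν : ∀ ξ, ξ < β → ν ξ ∈ c ∧ ξ < ν ξ ∧ ∀ y ∈ c, ξ < y → ν ξ ≤ y)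
    (hβc : β ∉ c)
    (hclosed : ∀ s ⊆ c, s.Nonempty → ∀ x, x ≤ β → IsLUB s x → x ∈ c)
    (hβup : ∃ y ∈ c, β < y)
    (hbound : ∀ δ ∈ c, β < δ → ∃ n, ∀ ξ, ξ < β → h β ξ < G δ ξ + n) :
    ∃ n, ∀ ξ, ξ < β → h β ξ < G (ν ξ) ξ + n := by
  -- the least element of `c` above `β`
  have hSne : {y | y ∈ c ∧ β < y}.Nonempty := by
    obtain ⟨y, hy, hlt⟩ := hβup; exact ⟨y, hy, hlt⟩
  set e' : ι := wmin _ hSne with he'def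
  have he'c : e' ∈ c := (wmin_mem _ hSne).1
  have he'β : β < e' := (wmin_mem _ hSne).2
  have he'min : ∀ y ∈ c, β < y → e' ≤ y := fun y h1 h2 => wmin_le hSne ⟨h1, h2⟩
  obtain ⟨n', hn'⟩ := hbound e' he'c he'β
  rcases Classical.em ((c ∩ Set.Iio β).Nonempty) with hne | hne
  · -- there are elements of `c` below `β`; take their supremum `e < β`
    have hubne : (upperBounds (c ∩ Set.Iio β)).Nonempty :=
      ⟨β, fun y hy => le_of_lt hy.2⟩
    set e : ι := wmin _ hubne with hedef
    have helub : IsLUB (c ∩ Set.Iio β) e :=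
      ⟨wmin_mem _ hubne, fun u hu => wmin_le hubne hu⟩
    have heβ : e ≤ β := wmin_le hubne (fun y hy => le_of_lt hy.2)
    have heltβ : e < β := by
      rcases lt_or_eq_of_le heβ with h1 | h1
      · exact h1
      · exfalso
        exact hβc (hclosed (c ∩ Set.Iio β) Set.inter_subset_left hne β le_rfl
          (h1 ▸ helub))
    have hνconst : ∀ ξ, e ≤ ξ → ξ < β → ν ξ = e' := by
      intro ξ h1 h2
      obtain ⟨hν1, hν2, hν3⟩ := hν ξ h2
      apply le_antisymm
      · exact hν3 e' he'c (lt_trans h2 he'β)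
      · rcases lt_trichotomy (ν ξ) β with hlt | heq | hgt
        · exact absurd (helub.1 ⟨hν1, hlt⟩) (not_le.2 (lt_of_le_of_lt h1 hν2))
        · exact absurd (heq ▸ hν1) hβc
        · exact he'min _ hν1 hgt
    refine ⟨max n' (h β e + 1), fun ξ hξ => ?_⟩
    rcases le_or_gt e ξ with h1 | h1
    · rw [hνconst ξ h1 hξ]
      exact lt_of_lt_of_le (hn' ξ hξ) (Nat.add_le_add_left (le_max_left _ _) _)
    · have h2 : h β ξ ≤ h β e := hmono ξ e (le_of_lt h1) heltβ
      have h3 : h β ξ < h β e + 1 := Nat.lt_succ_of_le h2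
      exact lt_of_lt_of_le h3 (le_trans (le_max_right n' _) (Nat.le_add_left _ _))
  · -- no element of `c` below `β`
    have hνconst : ∀ ξ, ξ < β → ν ξ = e' := by
      intro ξ h2
      obtain ⟨hν1, hν2, hν3⟩ := hν ξ h2
      apply le_antisymm
      · exact hν3 e' he'c (lt_trans h2 he'β)
      · rcases lt_trichotomy (ν ξ) β with hlt | heq | hgt
        · exact absurd ⟨hν1, hlt⟩ (fun hmem => hne ⟨ν ξ, hmem⟩)
        · exact absurd (heq ▸ hν1) hβc
        · exact he'min _ hν1 hgt
    refine ⟨n', fun ξ hξ => ?_⟩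
    rw [hνconst ξ hξ]
    exact hn' ξ hξ

/-- The main abstract construction: from a non-reflecting set of countable-cofinality
points, a family `h` such that `{h β : β ∈ A}` is weakly bounded iff `A ∩ E` is
non-stationary. -/
private theorem abstract_main {ι : Type} [LinearOrder ι] [WellFoundedLT ι]
    (hgt : ∀ x : ι, ∃ y, x < y)
    (hctbl : ∀ f : ℕ → ι, ∃ z, ∀ n, f n < z)
    (E : Set ι) (hEcof : ∀ α ∈ E, CofOmega α)
    (hEnonrefl : NonReflecting E) :
    ∃ h : ι → ι → ℕ, ∀ A : Set ι,
      WeaklyBoundedFam h A ↔ ¬ IsStationaryIn (A ∩ E) := by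
  classical
  -- choose ladders
  have hlad : ∀ β : ι, ∃ b : ℕ → ι,
      β ∈ E → StrictMono b ∧ (∀ n, b n < β) ∧ ∀ ξ < β, ∃ n, ξ ≤ b n := by
    intro β
    by_cases hβ : β ∈ E
    · obtain ⟨b, h1, h2, h3⟩ := hEcof β hβ
      exact ⟨b, fun _ => ⟨h1, h2, h3⟩⟩
    · exact ⟨fun _ => β, fun hc => absurd hc hβ⟩
  choose lad hladspec using hlad
  -- the family
  set h : ι → ι → ℕ := fun β ξ =>
    if _hβ : β ∈ E then (if hex : ∃ n, ξ ≤ lad β n then Nat.find hex else 0) else 0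
    with hhdef
  have hexists : ∀ {β ξ : ι}, β ∈ E → ξ < β → ∃ n, ξ ≤ lad β n :=
    fun {β ξ} hβ hξ => (hladspec β hβ).2.2 ξ hξ
  have h_val : ∀ {β ξ : ι} (hβ : β ∈ E) (hex : ∃ n, ξ ≤ lad β n),
      h β ξ = Nat.find hex := by
    intro β ξ hβ hex
    simp only [hhdef, dif_pos hβ, dif_pos hex]
  have h_zero : ∀ {β : ι}, β ∉ E → ∀ ξ, h β ξ = 0 := by
    intro β hβ ξ
    simp only [hhdef, dif_neg hβ]
  have h_spec : ∀ {β ξ : ι} (hβ : β ∈ E) (hξ : ξ < β), ξ ≤ lad β (h β ξ) := by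
    intro β ξ hβ hξ
    rw [h_val hβ (hexists hβ hξ)]
    exact Nat.find_spec (hexists hβ hξ)
  have h_mono : ∀ {β : ι}, β ∈ E → ∀ ξ ξ' : ι, ξ ≤ ξ' → ξ' < β → h β ξ ≤ h β ξ' := by
    intro β hβ ξ ξ' hle hξ'
    have hex' := hexists hβ hξ'
    have hex : ∃ n, ξ ≤ lad β n := by
      obtain ⟨n, hn⟩ := hex'
      exact ⟨n, le_trans hle hn⟩
    rw [h_val hβ hex, h_val hβ hex']
    exact Nat.find_mono fun n hn => le_trans hle hn
  have h_gt : ∀ {β ξ : ι} (hβ : β ∈ E) (hξ : ξ < β) {m : ℕ},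
      lad β m < ξ → m < h β ξ := by
    intro β ξ hβ hξ m hm
    by_contra hle
    push_neg at hle
    have h1 : lad β (h β ξ) ≤ lad β m := (hladspec β hβ).1.monotone hle
    exact absurd (le_trans (h_spec hβ hξ) h1) (not_le.2 hm)
  -- key inductive fact: every initial segment of `E` is weakly bounded
  have key : ∀ γ : ι, ∃ g : ι → ℕ,
      ∀ β, β ∈ E → β < γ → ∃ n, ∀ ξ, ξ < β → h β ξ < g ξ + n := by
    intro γ
    induction γ using WellFoundedLT.induction with
    | _ γ IH =>
      by_cases hmin : ∃ x : ι, x < γ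
      · by_cases hlim : ∀ x < γ, ∃ y, x < y ∧ y < γ
        · -- limit case: use non-reflection
          have hster := hEnonrefl γ ⟨hmin, hlim⟩
          rw [IsStationaryBelow] at hster
          push_neg at hster
          obtain ⟨c, hc, hcdisj⟩ := hster
          have hcE : ∀ y ∈ c, y ∉ E := by
            intro y hy hyE
            exact Set.eq_empty_iff_forall_notMem.1 hcdisj y ⟨⟨hyE, hc.1 hy⟩, hy⟩
          have hIH : ∀ δ : ι, ∃ g : ι → ℕ, δ < γ →
              ∀ β, β ∈ E → β < δ → ∃ n, ∀ ξ, ξ < β → h β ξ < g ξ + n := by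
            intro δ
            by_cases hδ : δ < γ
            · obtain ⟨g, hg⟩ := IH δ hδ
              exact ⟨g, fun _ => hg⟩
            · exact ⟨fun _ => 0, fun hcon => absurd hcon hδ⟩
          choose G hG using hIH
          set ν : ι → ι := fun ξ =>
            if hξ : {y | y ∈ c ∧ ξ < y}.Nonempty then wmin _ hξ else γ with hνdef
          refine ⟨fun ξ => G (ν ξ) ξ, ?_⟩
          intro β hβE hβγ
          refine glue_bound h β c ν G (fun ξ ξ' => h_mono hβE ξ ξ') ?_ ?_ ?_ ?_ ?_
          · intro ξ hξβ
            have hξne : {y | y ∈ c ∧ ξ < y}.Nonempty := by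
              obtain ⟨y, hy, hlt⟩ := hc.2.1 ξ (lt_trans hξβ hβγ)
              exact ⟨y, hy, hlt⟩
            have : ν ξ = wmin _ hξne := by rw [hνdef]; exact dif_pos hξne
            rw [this]
            exact ⟨(wmin_mem _ hξne).1, (wmin_mem _ hξne).2,
              fun y h1 h2 => wmin_le hξne ⟨h1, h2⟩⟩
          · exact fun hβc => hcE β hβc hβE
          · intro s hs hsne x hxβ hxlub
            exact hc.2.2 s hs hsne x (lt_of_le_of_lt hxβ hβγ) hxlub
          · obtain ⟨y, hy, hlt⟩ := hc.2.1 β hβγ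
            exact ⟨y, hy, hlt⟩
          · intro δ hδc hβδ
            exact hG δ (hc.1 hδc) β hβE hβδ
        · -- successor case
          push_neg at hlim
          obtain ⟨x, hxγ, hx⟩ := hlim
          obtain ⟨g, hg⟩ := IH x hxγ
          refine ⟨fun ξ => max (g ξ) (h x ξ + 1), ?_⟩
          intro β hβE hβγ
          have hβx : β ≤ x := by
            by_contra hbx
            push_neg at hbx
            exact absurd (hx β hbx) (not_le.2 hβγ)
          rcases lt_or_eq_of_le hβx with hlt | heq
          · obtain ⟨n, hn⟩ := hg β hβE hlt
            exact ⟨n, fun ξ hξ => lt_of_lt_of_le (hn ξ hξ)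
              (Nat.add_le_add_right (le_max_left _ _) _)⟩
          · subst heq
            refine ⟨1, fun ξ hξ => ?_⟩
            exact lt_of_lt_of_le (Nat.lt_succ_self _)
              (le_trans (le_max_right (g ξ) _) (Nat.le_succ _))
      · -- γ is minimal
        exact ⟨fun _ => 0, fun β _ hβγ => absurd ⟨β, hβγ⟩ hmin⟩
  choose Gg hGg using key
  refine ⟨h, fun A => ⟨?_, ?_⟩⟩
  · -- weakly bounded implies non-stationary
    rintro ⟨g, hg⟩ hstat
    -- some level set of `g` is unbounded
    have hk : ∃ k : ℕ, ∀ x : ι, ∃ ξ, g ξ ≤ k ∧ x < ξ := by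
      by_contra hcon
      push_neg at hcon
      choose x hx using hcon
      obtain ⟨z, hz⟩ := hctbl x
      obtain ⟨z', hz'⟩ := hgt z
      have h1 := hx (g z') z' le_rfl
      have h2 : x (g z') < z' := lt_trans (hz _) hz'
      exact absurd h1 (not_le.2 h2)
    obtain ⟨k, hk⟩ := hk
    -- the club of limit points of that level set
    set C : Set ι := {b : ι | ∀ x, x < b → ∃ ξ, g ξ ≤ k ∧ x < ξ ∧ ξ < b} with hCdef
    have hCclub : IsClubIn C := by
      constructor
      · -- unbounded
        intro x
        choose nxt hnxt1 hnxt2 using hk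
        set f : ℕ → ι := fun n => (fun y => nxt y)^[n + 1] x with hfdef
        have hfsucc : ∀ n, f (n + 1) = nxt (f n) := by
          intro n
          rw [hfdef]
          simp only [Function.iterate_succ_apply']
        have hf0 : f 0 = nxt x := by rw [hfdef]; simp
        have hfmono : StrictMono f := by
          apply strictMono_nat_of_lt_succ
          intro n
          rw [hfsucc n]
          exact hnxt2 (f n)
        have hfG : ∀ n, g (f n) ≤ k := by
          intro n
          cases n with
          | zero => rw [hf0]; exact hnxt1 x
          | succ m => rw [hfsucc m]; exact hnxt1 (f m)
        obtain ⟨z, hz⟩ := hctbl f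
        have hubne : (upperBounds (Set.range f)).Nonempty :=
          ⟨z, fun y ⟨n, hn⟩ => hn ▸ le_of_lt (hz n)⟩
        set b : ι := wmin _ hubne with hbdef
        have hblub : IsLUB (Set.range f) b :=
          ⟨wmin_mem _ hubne, fun u hu => wmin_le hubne hu⟩
        have hfb : ∀ n, f n ≤ b := fun n => hblub.1 ⟨n, rfl⟩
        refine ⟨b, ?_, ?_⟩
        · -- b ∈ C
          intro x' hx'b
          have : ∃ n, x' < f n := by
            by_contra hcon
            push_neg at hcon
            have : x' ∈ upperBounds (Set.range f) := fun y ⟨n, hn⟩ => hn ▸ hcon n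
            exact absurd (hblub.2 this) (not_le.2 hx'b)
          obtain ⟨n, hn⟩ := this
          exact ⟨f n, hfG n, hn, lt_of_lt_of_le (hfmono (Nat.lt_succ_self n)) (hfb (n + 1))⟩
        · -- x < b
          calc x < f 0 := hf0 ▸ hnxt2 x
            _ ≤ b := hfb 0
      · -- closed
        intro s hs hsne b hblub
        intro x hxb
        have : ∃ β ∈ s, x < β := by
          by_contra hcon
          push_neg at hcon
          exact absurd (hblub.2 fun y hy => hcon y hy) (not_le.2 hxb)
        obtain ⟨β, hβs, hxβ⟩ := this
        obtain ⟨ξ, hξ1, hξ2, hξ3⟩ := hs hβs x hxβ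
        exact ⟨ξ, hξ1, hξ2, lt_of_lt_of_le hξ3 (hblub.1 hβs)⟩
    obtain ⟨β, hβmem, hβC⟩ := hstat C hCclub
    obtain ⟨hβA, hβE⟩ := hβmem
    obtain ⟨n, hn⟩ := hg β hβA
    have hladlt : lad β (k + n) < β := (hladspec β hβE).2.1 (k + n)
    obtain ⟨ξ, hgξ, hlt1, hlt2⟩ := hβC (lad β (k + n)) hladlt
    have h1 : k + n < h β ξ := h_gt hβE hlt2 hlt1
    have h2 : h β ξ < g ξ + n := hn ξ hlt2
    omega
  · -- non-stationary implies weakly bounded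
    intro hnstat
    rw [IsStationaryIn] at hnstat
    push_neg at hnstat
    obtain ⟨D, hD, hdisj⟩ := hnstat
    have hDne : ∀ ξ : ι, {y | y ∈ D ∧ ξ < y}.Nonempty := by
      intro ξ
      obtain ⟨y, hy, hlt⟩ := hD.1 ξ
      exact ⟨y, hy, hlt⟩
    set ν : ι → ι := fun ξ => wmin _ (hDne ξ) with hνdef
    refine ⟨fun ξ => Gg (ν ξ) ξ, ?_⟩
    intro β hβA
    by_cases hβE : β ∈ E
    · have hβD : β ∉ D := fun hβD =>
        Set.eq_empty_iff_forall_notMem.1 hdisj β ⟨⟨hβA, hβE⟩, hβD⟩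
      refine glue_bound h β D ν Gg (fun ξ ξ' => h_mono hβE ξ ξ') ?_ hβD ?_ ?_ ?_
      · intro ξ _
        exact ⟨(wmin_mem _ (hDne ξ)).1, (wmin_mem _ (hDne ξ)).2,
          fun y h1 h2 => wmin_le (hDne ξ) ⟨h1, h2⟩⟩
      · intro s hs hsne x _ hxlub
        exact hD.2 s hs hsne x hxlub
      · obtain ⟨y, hy, hlt⟩ := hD.1 β
        exact ⟨y, hy, hlt⟩
      · intro δ _ hβδ
        exact hGg δ β hβE hβδ
    · refine ⟨1, fun ξ _ => ?_⟩
      rw [h_zero hβE]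
      omega

end Statement9Aux

/-- Theorem 6: If `E ⊆ {α < θ : cf(α) = ω}` is a non-reflecting stationary
set, then there is a `θ`-family `{h_β : β < θ}` such that `{h_β : β ∈ A}` is weakly bounded
iff `A ∩ E` is non-stationary; in particular the family is a non-extendible i.w.b.
`θ`-family. -/
theorem statement9 (θ : Cardinal) (hreg : θ.IsRegular) (hθ : ℵ₀ < θ)
    (E : Set θ.ord.ToType) (hEcof : ∀ α ∈ E, CofOmega α)
    (hEstat : IsStationaryIn E) (hEnonrefl : NonReflecting E) :
    ∃ h : θ.ord.ToType → θ.ord.ToType → ℕ,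
      (∀ A : Set θ.ord.ToType, WeaklyBoundedFam h A ↔ ¬ IsStationaryIn (A ∩ E)) ∧
      IWB θ h ∧ NonExtendible h := by
  classical
  have hℵ : ℵ₀ ≤ θ := le_of_lt hθ
  have hcof : θ.ord.cof = θ := hreg.cof_eq
  set e := Ordinal.ToType.mk (o := θ.ord) with hedef
  have hgt : ∀ x : θ.ord.ToType, ∃ y, x < y := by
    have := Cardinal.noMaxOrder hℵ
    exact fun x => exists_gt x
  have hbdd : ∀ s : Set θ.ord.ToType, #s < θ → ∃ z, ∀ y ∈ s, y ≤ z := by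
    intro s hs
    set F : s → Ordinal := fun a => (e.symm a.1).1 with hFdef
    have hFlt : ∀ a, F a < θ.ord := fun a => (e.symm a.1).2
    have hsup : iSup F < θ.ord := Ordinal.iSup_lt_ord (by rwa [hcof]) hFlt
    refine ⟨e ⟨iSup F, hsup⟩, fun y hy => ?_⟩
    have h1 : F ⟨y, hy⟩ ≤ iSup F := Ordinal.le_iSup F ⟨y, hy⟩
    have h2 : e.symm y ≤ ⟨iSup F, hsup⟩ := Subtype.coe_le_coe.1 h1
    calc y = e (e.symm y) := (e.apply_symm_apply y).symm
      _ ≤ e ⟨iSup F, hsup⟩ := e.le_iff_le.2 h2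
  have hctbl : ∀ f : ℕ → θ.ord.ToType, ∃ z, ∀ n, f n < z := by
    intro f
    have hmk : #(Set.range f) < θ := by
      refine lt_of_le_of_lt (le_trans Cardinal.mk_range_le ?_) hθ
      rw [Cardinal.mk_nat]
    obtain ⟨z, hz⟩ := hbdd (Set.range f) hmk
    obtain ⟨z', hz'⟩ := hgt z
    exact ⟨z', fun n => lt_of_le_of_lt (hz (f n) ⟨n, rfl⟩) hz'⟩
  obtain ⟨h, hiff⟩ := abstract_main hgt hctbl E hEcof hEnonrefl
  refine ⟨h, hiff, ?_, ?_⟩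
  · -- initially weakly bounded
    intro A hA
    apply (hiff A).2
    intro hstat
    obtain ⟨z, hz⟩ := hbdd A hA
    have hclub : IsClubIn (Set.Ioi z) := by
      constructor
      · intro w
        obtain ⟨y, hy⟩ := hgt (max w z)
        exact ⟨y, lt_of_le_of_lt (le_max_right w z) hy,
          lt_of_le_of_lt (le_max_left w z) hy⟩
      · intro s hs hsne b hblub
        obtain ⟨a, ha⟩ := hsne
        exact lt_of_lt_of_le (hs ha) (hblub.1 ha)
    obtain ⟨y, ⟨hyA, _⟩, hyz⟩ := hstat (Set.Ioi z) hclub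
    exact absurd (hz y hyA) (not_le.2 hyz)
  · -- non-extendible
    intro hwb
    exact ((hiff Set.univ).1 hwb) (by rwa [Set.univ_inter])
end

section
/- Let θ be a regular uncountable cardinal, let E ⊆ {α < θ : cf(α) = ω}, and for each α ∈ E fix a strictly increasing function a_α : ω → α whose range is cofinal in α. Define h_β : β → ω for β < θ by h_β(α) = min{n ∈ ω : a_α(n) ≠ a_β(n)} if α ∈ E and β ∈ E, and h_β(α) = 0 otherwise. Then for every stationary A ⊆ E, the family {h_β : β ∈ A} is not weakly bounded. -/
open Cardinal Set TopologicalSpace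

open scoped Classical

private lemma aux_bound {θ : Cardinal} (hreg : θ.IsRegular) (s : Set θ.ord.ToType)
    (hs : #s < θ) : ∃ b : θ.ord.ToType, ∀ x ∈ s, x < b := by
  have hlim : Order.IsSuccLimit θ.ord := Cardinal.isSuccLimit_ord hreg.aleph0_le
  have hne : Nonempty θ.ord.ToType :=
    Ordinal.toType_nonempty_iff_ne_zero.2 hlim.pos.ne'
  rcases Set.eq_empty_or_nonempty s with rfl | _
  · exact ⟨Classical.arbitrary _, by simp⟩
  · let e := (Ordinal.ToType.mk (o := θ.ord)).symm
    let f : ↥s → Ordinal := fun x => (e x.1).1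
    have hsup : iSup f < θ.ord := by
      apply Cardinal.iSup_lt_ord_of_isRegular hreg hs
      intro i; exact (e i.1).2
    have hsup1 : iSup f + 1 < θ.ord := by
      rw [Ordinal.add_one_eq_succ]; exact hlim.succ_lt hsup
    refine ⟨e.symm ⟨iSup f + 1, hsup1⟩, ?_⟩
    intro x hx
    have h1 : f ⟨x, hx⟩ ≤ iSup f := Ordinal.le_iSup f ⟨x, hx⟩
    rw [← e.lt_iff_lt, OrderIso.apply_symm_apply, ← Subtype.coe_lt_coe]
    exact lt_of_le_of_lt h1 (lt_add_one _)

private lemma aux_lub {ι : Type*} [LinearOrder ι] [WellFoundedLT ι] {s : Set ι}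
    (hne : s.Nonempty) {b : ι} (hb : ∀ x ∈ s, x < b) : ∃ x, IsLUB s x := by
  have hub : (upperBounds s).Nonempty := ⟨b, fun x hx => (hb x hx).le⟩
  obtain ⟨m, hm, hmin⟩ :=
    (IsWellFounded.wf (r := ((· < ·) : ι → ι → Prop))).has_min _ hub
  exact ⟨m, hm, fun y hy => not_lt.1 (hmin y hy)⟩

private lemma aux_Iic {θ : Cardinal} (hreg : θ.IsRegular) (hθ : ℵ₀ < θ)
    (x : θ.ord.ToType) : #(Set.Iic x) < θ := by
  rw [← Set.Iio_insert]
  apply lt_of_le_of_lt Cardinal.mk_insert_le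
  exact Cardinal.add_lt_of_lt hreg.aleph0_le (Cardinal.mk_Iio_ord_toType x)
    (lt_trans Cardinal.one_lt_aleph0 hθ)


/-- With `h_β(α) = min{n : a_α(n) ≠ a_β(n)}` for `α, β ∈ E` (and `0`
otherwise), for every stationary `A ⊆ E` the family `{h_β : β ∈ A}` is not weakly
bounded. -/

theorem statement10 (θ : Cardinal) (hreg : θ.IsRegular) (hθ : ℵ₀ < θ)
    (E : Set θ.ord.ToType) (hEcof : ∀ α ∈ E, CofOmega α)
    (a : θ.ord.ToType → ℕ → θ.ord.ToType)
    (ha : ∀ α ∈ E, StrictMono (a α) ∧ (∀ n, a α n < α) ∧ ∀ ξ < α, ∃ n, ξ ≤ a α n)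
    (h : θ.ord.ToType → θ.ord.ToType → ℕ)
    (hh : ∀ α β : θ.ord.ToType, α < β →
      h β α = if α ∈ E ∧ β ∈ E then sInf {n : ℕ | a α n ≠ a β n} else 0)
    (A : Set θ.ord.ToType) (hAE : A ⊆ E) (hAstat : IsStationaryIn A) :
    ¬ WeaklyBoundedFam h A := by
  rintro ⟨g, hg⟩
  have hg' : ∀ β ∈ A, ∃ m : ℕ, ∀ ξ < β, h β ξ < g ξ + m := fun β hβ => hg β hβ
  choose! n hn using hg'
  have hfex : ∀ β ∈ A, ∃ y, y < β ∧ ∀ k ≤ g β + n β, a β k ≤ y := by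
    intro β hβ
    obtain ⟨ha1, ha2, ha3⟩ := ha β (hAE hβ)
    have hT : (Finset.range (g β + n β + 1)).Nonempty := ⟨0, by simp⟩
    obtain ⟨i, hi, hieq⟩ := Finset.exists_mem_eq_sup' hT (a β)
    refine ⟨(Finset.range (g β + n β + 1)).sup' hT (a β), by rw [hieq]; exact ha2 i, ?_⟩
    intro k hk
    exact Finset.le_sup' (a β) (Finset.mem_range.2 (Nat.lt_succ_of_le hk))
  haveI : Nonempty θ.ord.ToType := Ordinal.toType_nonempty_iff_ne_zero.2
    (Cardinal.isSuccLimit_ord hreg.aleph0_le).pos.ne'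
  choose! f hflt hfle using hfex
  -- weak version of Fodor's lemma
  have key : ∃ δ : θ.ord.ToType, ∀ b, ∃ x, x ∈ A ∧ f x ≤ δ ∧ b ≤ x := by
    by_contra hcon
    push_neg at hcon
    choose b0 hb0 using hcon
    have step : ∀ t : θ.ord.ToType, ∃ t', t < t' ∧ ∀ y ≤ t, b0 y < t' := by
      intro t
      have hcard : #(insert t (b0 '' Set.Iic t) : Set _) < θ := by
        apply lt_of_le_of_lt Cardinal.mk_insert_le
        apply Cardinal.add_lt_of_lt hreg.aleph0_le
        · exact lt_of_le_of_lt Cardinal.mk_image_le (aux_Iic hreg hθ t)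
        · exact lt_trans Cardinal.one_lt_aleph0 hθ
      obtain ⟨t', ht'⟩ := aux_bound hreg _ hcard
      exact ⟨t', ht' t (Set.mem_insert _ _),
        fun y hy => ht' _ (Set.mem_insert_iff.2 (Or.inr ⟨y, hy, rfl⟩))⟩
    choose st hst1 hst2 using step
    set C : Set θ.ord.ToType := {x | ∀ y < x, b0 y < x} with hC
    have hclub : IsClubIn C := by
      constructor
      · intro t
        set x : ℕ → θ.ord.ToType := fun k => st^[k] (st t) with hx
        have hxs : ∀ k, x (k + 1) = st (x k) :=
          fun k => Function.iterate_succ_apply' st k (st t)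
        have hmono : ∀ k, x k < x (k + 1) := fun k => (hxs k) ▸ hst1 (x k)
        have hbd : #(Set.range x) < θ :=
          lt_of_le_of_lt (Set.countable_range x).le_aleph0 hθ
        obtain ⟨b, hb⟩ := aux_bound hreg _ hbd
        obtain ⟨ℓ, hℓ⟩ := aux_lub (s := Set.range x) ⟨x 0, ⟨0, rfl⟩⟩ hb
        refine ⟨ℓ, ?_, lt_of_lt_of_le (hst1 t) (hℓ.1 ⟨0, rfl⟩)⟩
        intro y hy
        by_cases hall : ∀ k, x k ≤ y
        · have : y ∈ upperBounds (Set.range x) := by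
            rintro z ⟨k, rfl⟩; exact hall k
          exact absurd (hℓ.2 this) (not_le.2 hy)
        · push_neg at hall
          obtain ⟨k, hk⟩ := hall
          have hby : b0 y < x (k + 1) := by
            rw [hxs]; exact hst2 (x k) y hk.le
          exact lt_of_lt_of_le hby (hℓ.1 ⟨k + 1, rfl⟩)
      · intro s hs hsne x hx
        intro y hy
        obtain ⟨z, hzs, hyz⟩ : ∃ z ∈ s, y < z := by
          by_contra hcon2
          push_neg at hcon2
          exact absurd (hx.2 fun z hz => hcon2 z hz) (not_le.2 hy)
        exact lt_of_lt_of_le (hs hzs y hyz) (hx.1 hzs)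
    obtain ⟨β, hβA, hβC⟩ := hAstat C hclub
    have h1 : β < b0 (f β) := hb0 (f β) β hβA le_rfl
    have h2 : b0 (f β) < β := hβC (f β) (hflt β hβA)
    exact absurd h1 (not_lt.2 h2.le)
  obtain ⟨δ, hδ⟩ := key
  set A' : Set θ.ord.ToType := {x | x ∈ A ∧ f x ≤ δ} with hA'
  have hA'card : θ ≤ #A' := by
    by_contra hlt
    obtain ⟨b, hb⟩ := aux_bound hreg A' (not_le.1 hlt)
    obtain ⟨x, hx1, hx2, hx3⟩ := hδ b
    exact absurd (hb x ⟨hx1, hx2⟩) (not_lt.2 hx3)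
  haveI : Nonempty ↥(Set.Iic δ) := ⟨⟨δ, Set.self_mem_Iic⟩⟩
  have hY : #(ℕ × List ↥(Set.Iic δ)) < θ := by
    rw [Cardinal.mk_prod, Cardinal.mk_nat, Cardinal.lift_aleph0, Cardinal.lift_uzero,
      Cardinal.mk_list_eq_max_mk_aleph0]
    exact Cardinal.mul_lt_of_lt hreg.aleph0_le hθ (max_lt (aux_Iic hreg hθ δ) hθ)
  let F : ↥A' → ℕ × List ↥(Set.Iic δ) := fun x =>
    (n x.1, List.ofFn (fun i : Fin (g x.1 + n x.1) =>
      (⟨a x.1 i, le_trans (hfle x.1 x.2.1 i i.2.le) x.2.2⟩ : ↥(Set.Iic δ))))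
  have hninj : ¬ Function.Injective F := by
    intro hinj
    exact absurd (le_trans hA'card (Cardinal.mk_le_of_injective hinj)) (not_le.2 hY)
  obtain ⟨p, q, hFpq, hpq⟩ := Function.not_injective_iff.1 hninj
  have main : ∀ p q : ↥A', p.1 < q.1 → F p = F q → False := by
    intro α β hlt hF
    have hnab : n α.1 = n β.1 := congrArg Prod.fst hF
    have hlist := congrArg Prod.snd hF
    simp only [F] at hlist
    have hlen : g α.1 + n α.1 = g β.1 + n β.1 := by
      simpa using congrArg List.length hlist
    have hagree : ∀ k, k < g α.1 + n α.1 → a α.1 k = a β.1 k := by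
      intro k hk
      have h1 := List.getElem_of_eq hlist (by simpa using hk)
      rw [List.getElem_ofFn, List.getElem_ofFn] at h1
      exact congrArg Subtype.val h1
    have hαE := hAE α.2.1
    have hβE := hAE β.2.1
    have hnonempty : {k : ℕ | a α.1 k ≠ a β.1 k}.Nonempty := by
      obtain ⟨k, hk⟩ := (ha β.1 hβE).2.2 α.1 hlt
      refine ⟨k, fun he => ?_⟩
      have hlt2 := (ha α.1 hαE).2.1 k
      rw [he] at hlt2
      exact absurd hk (not_le.2 hlt2)
    have hsge : g α.1 + n α.1 ≤ sInf {k | a α.1 k ≠ a β.1 k} := by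
      by_contra hconn
      push_neg at hconn
      exact (Nat.sInf_mem hnonempty) (hagree _ hconn)
    have hbound := hn β.1 β.2.1 α.1 hlt
    rw [hh α.1 β.1 hlt, if_pos ⟨hαE, hβE⟩, ← hnab] at hbound
    exact absurd hbound (not_lt.2 hsge)
  rcases lt_trichotomy p.1 q.1 with hlt | heq | hlt
  · exact main p q hlt hFpq
  · exact hpq (Subtype.ext heq)
  · exact main q p hlt hFpq.symm
end

section
/- Let θ be a regular uncountable cardinal, let E ⊆ {α < θ : cf(α) = ω} be non-reflecting, and for each α ∈ E fix a strictly increasing function a_α : ω → α whose range is cofinal in α. Define h_β : β → ω for β < θ by h_β(α) = min{n ∈ ω : a_α(n) ≠ a_β(n)} if α ∈ E and β ∈ E, and h_β(α) = 0 otherwise. Then for every A ⊆ θ such that A ∩ E is non-stationary in θ, the family {h_β : β ∈ A} is weakly bounded. -/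
open Cardinal Set TopologicalSpace

open scoped Classical


theorem core_aux {ι : Type*} [LinearOrder ι] [WellFoundedLT ι]
    (E : Set ι) (a : ι → ℕ → ι)
    (ha : ∀ α ∈ E, StrictMono (a α) ∧ (∀ n, a α n < α) ∧ ∀ ξ < α, ∃ n, ξ ≤ a α n)
    (h : ι → ι → ℕ)
    (hh : ∀ α β : ι, α < β →
      h β α = if α ∈ E ∧ β ∈ E then sInf {n : ℕ | a α n ≠ a β n} else 0)
    (A C : Set ι)
    (hC1 : ∀ β ∈ A, ∃ c ∈ C, β < c)
    (hC2 : ∀ β ∈ A, β ∈ E → ∀ x, IsLUB (C ∩ Set.Iio β) x → (C ∩ Set.Iio β).Nonempty → x ∈ C)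
    (hdisj : ∀ β ∈ A, β ∈ E → β ∉ C)
    (hP : ∀ c ∈ C, ∃ g : ι → ℕ, ∀ β ∈ E, β < c → ∃ n, ∀ ξ < β, h β ξ < g ξ + n) :
    ∃ g : ι → ℕ, ∀ β ∈ A, ∃ n, ∀ ξ < β, h β ξ < g ξ + n := by
  classical
  have wf : WellFounded ((· < ·) : ι → ι → Prop) := wellFounded_lt
  have hP' : ∀ c : ι, ∃ g : ι → ℕ, c ∈ C → ∀ β ∈ E, β < c → ∃ n, ∀ ξ < β, h β ξ < g ξ + n := by
    intro c
    by_cases hc : c ∈ C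
    · obtain ⟨g, hg⟩ := hP c hc
      exact ⟨g, fun _ => hg⟩
    · exact ⟨fun _ => 0, fun hc' => absurd hc' hc⟩
  choose G hG using hP'
  set cnext : ι → ι := fun ξ =>
    if hne : ({c | c ∈ C ∧ ξ < c} : Set ι).Nonempty then wf.min _ hne else ξ with hcnextdef
  refine ⟨fun ξ => G (cnext ξ) ξ, ?_⟩
  intro β hβA
  simp only []
  by_cases hβE : β ∈ E
  swap
  · refine ⟨1, fun ξ hξ => ?_⟩
    rw [hh ξ β hξ, if_neg (by tauto)]
    omega
  have hβC : β ∉ C := hdisj β hβA hβE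
  have hne' : ({c | c ∈ C ∧ β < c} : Set ι).Nonempty := by
    obtain ⟨c, hc, hbc⟩ := hC1 β hβA; exact ⟨c, hc, hbc⟩
  set c' := wf.min _ hne' with hc'def
  have hc'mem := wf.min_mem _ hne'
  have hc'C : c' ∈ C := hc'mem.1
  have hβc' : β < c' := hc'mem.2
  obtain ⟨n₁, hn₁⟩ := hG c' hc'C β hβE hβc'
  have key_high : ∀ ξ, ξ < β → (¬ ∃ c, c ∈ C ∧ ξ < c ∧ c < β) → cnext ξ = c' := by
    intro ξ hξ hhigh
    have hne2 : ({c | c ∈ C ∧ ξ < c} : Set ι).Nonempty := ⟨c', hc'C, hξ.trans hβc'⟩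
    have e1 : cnext ξ = wf.min _ hne2 := dif_pos hne2
    set y := wf.min _ hne2 with hydef
    have hymem := wf.min_mem _ hne2
    have hyC : y ∈ C := hymem.1
    have hξy : ξ < y := hymem.2
    rw [e1]
    rcases lt_trichotomy y c' with hlt | heq | hgt
    · exfalso
      rcases lt_trichotomy y β with hyβ | hyβ | hyβ
      · exact hhigh ⟨y, hyC, hξy, hyβ⟩
      · exact hβC (hyβ ▸ hyC)
      · exact wf.not_lt_min _ (⟨hyC, hyβ⟩ : y ∈ {c | c ∈ C ∧ β < c}) hlt
    · exact heq
    · exact absurd hgt (wf.not_lt_min _ (⟨hc'C, hξ.trans hβc'⟩ : c' ∈ {c | c ∈ C ∧ ξ < c}))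
  by_cases hS₁ : (C ∩ Set.Iio β).Nonempty
  · have hUne : (upperBounds (C ∩ Set.Iio β)).Nonempty := ⟨β, fun y hy => le_of_lt hy.2⟩
    set x := wf.min _ hUne with hxdef
    have hxU : x ∈ upperBounds (C ∩ Set.Iio β) := wf.min_mem _ hUne
    have hlub : IsLUB (C ∩ Set.Iio β) x :=
      ⟨hxU, fun y hy => not_lt.1 (wf.not_lt_min _ hy)⟩
    have hxC : x ∈ C := hC2 β hβA hβE x hlub hS₁
    have hxβ : x < β := by
      have hle : x ≤ β := not_lt.1 (wf.not_lt_min _ (show β ∈ upperBounds (C ∩ Set.Iio β) from fun y hy => le_of_lt hy.2))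
      exact lt_of_le_of_ne hle (fun e => hβC (e ▸ hxC))
    have Tne : ({n : ℕ | x < a β n}).Nonempty := by
      obtain ⟨n₀, hn₀⟩ := (ha β hβE).2.2 x hxβ
      exact ⟨n₀ + 1, lt_of_le_of_lt hn₀ ((ha β hβE).1 (Nat.lt_succ_self n₀))⟩
    set m := sInf {n : ℕ | x < a β n} with hmdef
    have hxm : x < a β m := Nat.sInf_mem Tne
    refine ⟨max n₁ (m + 1), fun ξ hξ => ?_⟩
    show h β ξ < G (cnext ξ) ξ + max n₁ (m + 1)
    by_cases hhigh : ∃ c, c ∈ C ∧ ξ < c ∧ c < β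
    · obtain ⟨c₀, hc₀C, hξc₀, hc₀β⟩ := hhigh
      have hξx : ξ < x := lt_of_lt_of_le hξc₀ (hxU ⟨hc₀C, hc₀β⟩)
      have hm : h β ξ ≤ m := by
        rw [hh ξ β hξ]
        by_cases hξE : ξ ∈ E
        · rw [if_pos ⟨hξE, hβE⟩]
          exact Nat.sInf_le (ne_of_lt (((ha ξ hξE).2.1 m).trans (hξx.trans hxm)))
        · rw [if_neg (by tauto)]; omega
      calc h β ξ < m + 1 := Nat.lt_succ_of_le hm
        _ ≤ max n₁ (m + 1) := le_max_right _ _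
        _ ≤ G (cnext ξ) ξ + max n₁ (m + 1) := Nat.le_add_left _ _
    · rw [key_high ξ hξ hhigh]
      exact lt_of_lt_of_le (hn₁ ξ hξ) (Nat.add_le_add_left (le_max_left _ _) _)
  · refine ⟨n₁, fun ξ hξ => ?_⟩
    show h β ξ < G (cnext ξ) ξ + n₁
    have hhigh : ¬ ∃ c, c ∈ C ∧ ξ < c ∧ c < β :=
      fun ⟨c, hc, _, hcβ⟩ => hS₁ ⟨c, hc, hcβ⟩
    rw [key_high ξ hξ hhigh]
    exact hn₁ ξ hξ


/-- With `E` non-reflecting and `h_β(α) = min{n : a_α(n) ≠ a_β(n)}` for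
`α, β ∈ E` (and `0` otherwise), for every `A ⊆ θ` with `A ∩ E` non-stationary, the family
`{h_β : β ∈ A}` is weakly bounded. -/

theorem statement11 (θ : Cardinal) (hreg : θ.IsRegular) (hθ : ℵ₀ < θ)
    (E : Set θ.ord.ToType) (hEcof : ∀ α ∈ E, CofOmega α) (hEnonrefl : NonReflecting E)
    (a : θ.ord.ToType → ℕ → θ.ord.ToType)
    (ha : ∀ α ∈ E, StrictMono (a α) ∧ (∀ n, a α n < α) ∧ ∀ ξ < α, ∃ n, ξ ≤ a α n)
    (h : θ.ord.ToType → θ.ord.ToType → ℕ)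
    (hh : ∀ α β : θ.ord.ToType, α < β →
      h β α = if α ∈ E ∧ β ∈ E then sInf {n : ℕ | a α n ≠ a β n} else 0)
    (A : Set θ.ord.ToType) (hA : ¬ IsStationaryIn (A ∩ E)) :
    WeaklyBoundedFam h A := by
  have main : ∀ δ : θ.ord.ToType, ∃ g : θ.ord.ToType → ℕ,
      ∀ β ∈ E, β < δ → ∃ n, ∀ ξ < β, h β ξ < g ξ + n := by
    intro δ
    induction δ using WellFoundedLT.induction with
    | _ δ IH =>
      by_cases h0 : ∃ x, x < δ
      · by_cases h1 : ∃ δ', δ' < δ ∧ ∀ x, x < δ → x ≤ δ'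
        · obtain ⟨δ', hδ'δ, hmax⟩ := h1
          obtain ⟨g, hg⟩ := IH δ' hδ'δ
          refine ⟨fun ξ => max (g ξ) (h δ' ξ), ?_⟩
          intro β hβE hβδ
          rcases eq_or_lt_of_le (hmax β hβδ) with heq | hlt
          · refine ⟨1, fun ξ hξ => ?_⟩
            show h β ξ < max (g ξ) (h δ' ξ) + 1
            have hle : h β ξ ≤ max (g ξ) (h δ' ξ) := by rw [heq]; exact le_max_right _ _
            omega
          · obtain ⟨n, hn⟩ := hg β hβE hlt
            refine ⟨n, fun ξ hξ => ?_⟩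
            show h β ξ < max (g ξ) (h δ' ξ) + n
            have h2 := hn ξ hξ
            have h3 : g ξ ≤ max (g ξ) (h δ' ξ) := le_max_left _ _
            omega
        · have h2 : ∀ x, x < δ → ∃ y, x < y ∧ y < δ := by
            intro x hx
            by_contra hcon
            push_neg at hcon
            refine h1 ⟨x, hx, fun z hz => ?_⟩
            by_contra hzx
            exact absurd hz (not_lt.2 (hcon z (not_le.1 hzx)))
          have hns := hEnonrefl δ ⟨h0, h2⟩
          simp only [IsStationaryBelow] at hns
          push_neg at hns
          obtain ⟨C, hCclub, hCdis⟩ := hns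
          obtain ⟨g, hg⟩ := core_aux E a ha h hh (E ∩ Set.Iio δ) C
            (fun β hβ => hCclub.2.1 β hβ.2)
            (fun β hβ _ x hx hne => hCclub.2.2 (C ∩ Set.Iio β) Set.inter_subset_left hne x
              (lt_of_le_of_lt (hx.2 (fun y hy => le_of_lt hy.2)) hβ.2) hx)
            (fun β hβ _ hβC => absurd (Set.eq_empty_iff_forall_notMem.1 hCdis β) (not_not_intro ⟨hβ, hβC⟩))
            (fun c hc => IH c (hCclub.1 hc))
          exact ⟨g, fun β hβE hβδ => hg β ⟨hβE, hβδ⟩⟩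
      · exact ⟨fun _ => 0, fun β _ hβδ => absurd ⟨β, hβδ⟩ h0⟩
  simp only [IsStationaryIn] at hA
  push_neg at hA
  obtain ⟨C, hCclub, hCdis⟩ := hA
  obtain ⟨g, hg⟩ := core_aux E a ha h hh A C
    (fun β _ => hCclub.1 β)
    (fun β _ _ x hx hne => hCclub.2 (C ∩ Set.Iio β) Set.inter_subset_left hne x hx)
    (fun β hβA hβE hβC => absurd (Set.eq_empty_iff_forall_notMem.1 hCdis β) (not_not_intro ⟨⟨hβA, hβE⟩, hβC⟩))
    (fun c _ => main c)
  exact ⟨g, fun β hβ => hg β hβ⟩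
end

section
/- Let θ be an uncountable cardinal. If there exists a non-extendible initially weakly bounded θ-family {h_β : β < θ}, then the sets H_{αβ} = {(n,m) ∈ ω × ω : n + m ≤ h_β(α)} (for α < β < θ) form a family of finite closed-downward subsets of ω × ω such that (a) for every A ⊆ θ with |A| < θ there is f : θ → ω with (f(α),f(β)) ∉ H_{αβ} for all α < β in A, and (b) for every f : θ → ω there are α < β < θ with (f(α),f(β)) ∈ H_{αβ}. -/
open Cardinal Set TopologicalSpace

/-- From a non-extendible i.w.b. `θ`-family `{h_β}`, the sets
`H_{αβ} = {(n,m) : n + m ≤ h_β(α)}` are finite, c.d.w., and satisfy (a) and (b). -/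
theorem statement12 (θ : Cardinal) (hθ : ℵ₀ < θ)
    (h : θ.ord.ToType → θ.ord.ToType → ℕ)
    (hiwb : IWB θ h) (hne : NonExtendible h) :
    (∀ α β : θ.ord.ToType, α < β →
      ({p : ℕ × ℕ | p.1 + p.2 ≤ h β α}).Finite ∧ IsCDW {p : ℕ × ℕ | p.1 + p.2 ≤ h β α}) ∧
    (∀ A : Set θ.ord.ToType, #A < θ →
      ∃ f : θ.ord.ToType → ℕ, ∀ α ∈ A, ∀ β ∈ A, α < β →
        (f α, f β) ∉ {p : ℕ × ℕ | p.1 + p.2 ≤ h β α}) ∧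
    (∀ f : θ.ord.ToType → ℕ, ∃ α β : θ.ord.ToType, α < β ∧
      (f α, f β) ∈ {p : ℕ × ℕ | p.1 + p.2 ≤ h β α}) := by
  refine ⟨?_, ?_, ?_⟩
  · intro α β _
    constructor
    · apply Set.Finite.subset (Set.finite_Iic (h β α, h β α))
      intro p hp
      simp only [Set.mem_setOf_eq] at hp
      exact ⟨le_trans (Nat.le_add_right _ _) hp, le_trans (Nat.le_add_left _ _) hp⟩
    · intro p hp q hq1 hq2
      exact le_trans (Nat.add_le_add hq1 hq2) hp
  · intro A hA
    obtain ⟨g, hg⟩ := hiwb A hA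
    classical
    choose! n hn using hg
    refine ⟨fun α => g α + n α, ?_⟩
    intro α hα β hβ hαβ hmem
    simp only [Set.mem_setOf_eq] at hmem
    have := hn β hβ α hαβ
    omega
  · intro f
    by_contra hcon
    push_neg at hcon
    apply hne
    refine ⟨f, fun β _ => ⟨f β, fun ξ hξ => ?_⟩⟩
    have := hcon ξ β hξ
    simp only [Set.mem_setOf_eq] at this
    omega
end

section
/- Let θ be an uncountable cardinal. If there exists a non-extendible initially weakly bounded θ-family, then there exists a θ-good subset of F_{θ,ω} × F_{θ,ω}. -/
open Cardinal Set TopologicalSpace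

section Aux

open Cardinal Set TopologicalSpace

/-- The basic open neighborhood `B_F` of `*` in the fan. -/
def fanBasic {ι : Type*} (F : ι → ℕ) : Set (Option (ι × ℕ)) :=
  {x | ∀ p : ι × ℕ, x = some p → F p.1 ≤ p.2}

lemma fanBasic_none {ι : Type*} (F : ι → ℕ) : (none : Option (ι × ℕ)) ∈ fanBasic F := by
  intro p hp; cases hp

lemma fanBasic_some {ι : Type*} (F : ι → ℕ) {p : ι × ℕ} :
    some p ∈ fanBasic F ↔ F p.1 ≤ p.2 := by
  constructor
  · intro h; exact h p rfl
  · intro h q hq; cases hq; exact h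

lemma fanBasic_isOpen {ι : Type*} (F : ι → ℕ) :
    @IsOpen _ (fanTopology ι) (fanBasic F) := by
  intro _
  exact ⟨F, fun p hp => (fanBasic_some F).mpr hp⟩

theorem statement13' (θ : Cardinal) (hθ : ℵ₀ < θ)
    (hfam : ∃ h : θ.ord.ToType → θ.ord.ToType → ℕ, IWB θ h ∧ NonExtendible h) :
    ∃ S : Set (Option (θ.ord.ToType × ℕ) × Option (θ.ord.ToType × ℕ)),
      IsThetaGood θ S := by
  classical
  obtain ⟨h, hiwb, hne⟩ := hfam
  letI ts : TopologicalSpace (Option (θ.ord.ToType × ℕ) × Option (θ.ord.ToType × ℕ)) :=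
    fanSqTopology θ.ord.ToType
  refine ⟨{p | ∃ ξ β n m, ξ < β ∧ h β ξ = n + m ∧ p = (some (ξ, n), some (β, m))}, ?_, ?_⟩
  · -- (*,*) ∈ closure S
    rw [mem_closure_iff]
    intro U hU hmem
    obtain ⟨V, W, hV, hW, hnV, hnW, hVW⟩ :=
      (@isOpen_prod_iff _ _ (fanTopology _) (fanTopology _) U).mp hU none none hmem
    obtain ⟨f, hf⟩ := hV hnV
    obtain ⟨g, hg⟩ := hW hnW
    have hne' : ¬ ∀ β ∈ (Set.univ : Set θ.ord.ToType), WeaklyBounds f h β :=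
      fun hc => hne ⟨f, hc⟩
    push_neg at hne'
    obtain ⟨β, -, hβ⟩ := hne'
    unfold WeaklyBounds at hβ
    push_neg at hβ
    obtain ⟨ξ, hξβ, hle⟩ := hβ (g (β, 0).1)
    -- hle : f ξ + g β ≤ h β ξ
    refine ⟨(some (ξ, h β ξ - g (β, 0).1), some (β, g (β, 0).1)), hVW ⟨?_, ?_⟩, ?_⟩
    · exact hf (ξ, h β ξ - g (β, 0).1) (Nat.le_sub_of_add_le hle)
    · exact hg (β, g (β, 0).1) le_rfl
    · exact ⟨ξ, β, h β ξ - g (β, 0).1, g (β, 0).1, hξβ,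
        (Nat.sub_add_cancel (le_trans (Nat.le_add_left _ _) hle)).symm, rfl⟩
  · -- small subsets
    intro T hTS hT
    set A : Set θ.ord.ToType := {β | ∃ ξ n m, (some (ξ, n), some (β, m)) ∈ T} with hA
    have hAT : #A ≤ #T := by
      have hwit : ∀ β : A, ∃ q : T, ∃ ξ n m,
          (q : Option (θ.ord.ToType × ℕ) × Option (θ.ord.ToType × ℕ)) =
            (some (ξ, n), some ((β : θ.ord.ToType), m)) := by
        rintro ⟨β, ξ, n, m, hq⟩
        exact ⟨⟨_, hq⟩, ξ, n, m, rfl⟩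
      choose j ξw nw mw hj using hwit
      have hjinj : Function.Injective j := by
        intro a b hab
        have h2 := (hj a).symm.trans ((congrArg (Subtype.val) hab).trans (hj b))
        have := congrArg Prod.snd h2
        simp only [Option.some.injEq, Prod.mk.injEq] at this
        exact Subtype.ext this.1
      exact Cardinal.mk_le_of_injective hjinj
    obtain ⟨g₀, hg₀⟩ := hiwb A (lt_of_le_of_lt hAT hT)
    have hN : ∀ β : θ.ord.ToType, ∃ n : ℕ, β ∈ A → ∀ ξ < β, h β ξ < g₀ ξ + n := by
      intro β
      by_cases hβ : β ∈ A
      · obtain ⟨n, hn⟩ := hg₀ β hβ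
        exact ⟨n, fun _ => hn⟩
      · exact ⟨0, fun hc => absurd hc hβ⟩
    choose N hNspec using hN
    intro hcl
    rw [mem_closure_iff] at hcl
    obtain ⟨p, hpU, hpT⟩ := hcl (fanBasic g₀ ×ˢ fanBasic N)
      (@IsOpen.prod _ _ (fanTopology _) (fanTopology _) _ _
        (fanBasic_isOpen g₀) (fanBasic_isOpen N))
      ⟨fanBasic_none _, fanBasic_none _⟩
    obtain ⟨ξ, β, n, m, hξβ, hsum, hp⟩ := hTS hpT
    subst hp
    have hβA : β ∈ A := ⟨ξ, n, m, hpT⟩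
    have h1 : g₀ ξ ≤ n := (fanBasic_some _).mp hpU.1
    have h2 : N β ≤ m := (fanBasic_some _).mp hpU.2
    have := hNspec β hβA ξ hξβ
    omega

end Aux

/-- If there is a non-extendible i.w.b. `θ`-family, then there is a `θ`-good
subset of `F_{θ,ω} × F_{θ,ω}`. -/
theorem statement13 (θ : Cardinal) (hθ : ℵ₀ < θ)
    (hfam : ∃ h : θ.ord.ToType → θ.ord.ToType → ℕ, IWB θ h ∧ NonExtendible h) :
    ∃ S : Set (Option (θ.ord.ToType × ℕ) × Option (θ.ord.ToType × ℕ)),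
      IsThetaGood θ S :=
  statement13' θ hθ hfam
end

section
/- Let θ be a regular uncountable cardinal and suppose there exists a non-reflecting stationary set E ⊆ {α < θ : cf(α) = ω}. Then there exists a θ-good subset of F_{θ,ω} × F_{θ,ω}. -/
open Cardinal Set TopologicalSpace

section AuxStatement14

open Ordinal

instance (o : Ordinal) : IsWellOrder o.ToType (· < ·) := isWellOrder_lt

private lemma exists_isLUB_of_wf {ι : Type} [LinearOrder ι]
    (wf : WellFounded ((· < ·) : ι → ι → Prop))
    {s : Set ι} (hne : s.Nonempty) {b : ι} (hb : b ∈ upperBounds s) :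
    ∃ x, IsLUB s x := by
  have hU : (upperBounds s).Nonempty := ⟨b, hb⟩
  exact ⟨wf.min _ hU, wf.min_mem _ hU, fun v hv => not_lt.1 (wf.not_lt_min _ hv)⟩

private lemma master14 {ι : Type} [LinearOrder ι] (θ : Cardinal)
    (wf : WellFounded ((· < ·) : ι → ι → Prop))
    (hne : Nonempty ι)
    (hθω : ℵ₀ < θ)
    (hcard : ∀ A : Set ι, #A < θ → ∃ y, ∀ a ∈ A, a < y)
    (E : Set ι) (hE1 : ∀ α ∈ E, CofOmega α) (hE2 : IsStationaryIn E)
    (hE3 : NonReflecting E) :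
    ∃ S : Set (Option (ι × ℕ) × Option (ι × ℕ)), IsThetaGood θ S := by
  classical
  obtain ⟨x₀⟩ := hne
  -- ladders
  let lad : ι → ℕ → ι := fun α => if h : α ∈ E then (hE1 α h).choose else fun _ => α
  have hlad : ∀ α ∈ E, StrictMono (lad α) ∧ (∀ n, lad α n < α) ∧ ∀ ξ < α, ∃ n, ξ ≤ lad α n := by
    intro α h
    simp only [lad, dif_pos h]
    exact (hE1 α h).choose_spec
  -- rank function
  let rk : ι → ι → ℕ := fun α ξ => sInf {k | ξ ≤ lad α k}
  have hrk_mem : ∀ α ∈ E, ∀ ξ < α, ξ ≤ lad α (rk α ξ) := by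
    intro α hα ξ hξ
    obtain ⟨n, hn⟩ := (hlad α hα).2.2 ξ hξ
    exact Nat.sInf_mem (⟨n, hn⟩ : {k | ξ ≤ lad α k}.Nonempty)
  have hrk_mono : ∀ α ∈ E, ∀ ξ σ : ι, ξ ≤ σ → σ < α → rk α ξ ≤ rk α σ := by
    intro α hα ξ σ hξσ hσ
    exact Nat.sInf_le (le_trans hξσ (hrk_mem α hα σ hσ))
  have hrk_big : ∀ α ∈ E, ∀ ξ < α, ∀ k, lad α k < ξ → k < rk α ξ := by
    intro α hα ξ hξ k hk
    by_contra h
    push_neg at h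
    have h1 := hrk_mem α hα ξ hξ
    have h2 : ξ ≤ lad α k := le_trans h1 ((hlad α hα).1.monotone h)
    exact absurd hk (not_lt.2 h2)
  -- the key initial weak-boundedness, by induction using non-reflection
  have key : ∀ γ : ι, ∃ g : ι → ℕ, ∀ α ∈ E, α < γ → ∃ n, ∀ ξ < α, rk α ξ < g ξ + n := by
    intro γ
    induction γ using WellFounded.induction wf with
    | _ γ IH =>
    by_cases h0 : ∃ x, x < γ
    · by_cases h1 : ∀ x < γ, ∃ y, x < y ∧ y < γ
      · -- limit case
        have hns := hE3 γ ⟨h0, h1⟩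
        rw [IsStationaryBelow] at hns
        push_neg at hns
        obtain ⟨C, hC, hCE⟩ := hns
        have hCsub : C ⊆ Set.Iio γ := hC.1
        have hCnotE : ∀ α ∈ E, α < γ → α ∉ C := fun α hα hαγ hαC =>
          (Set.eq_empty_iff_forall_notMem.1 hCE α) ⟨⟨hα, hαγ⟩, hαC⟩
        let G : ι → ι → ℕ := fun δ => if h : δ < γ then (IH δ h).choose else fun _ => 0
        have hG : ∀ δ, ∀ h : δ < γ, ∀ α ∈ E, α < δ → ∃ n, ∀ ξ < α, rk α ξ < G δ ξ + n := by
          intro δ h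
          simp only [G, dif_pos h]
          exact (IH δ h).choose_spec
        let d : ι → ι := fun ξ => if h : {c | c ∈ C ∧ ξ < c}.Nonempty then wf.min _ h else γ
        have hd : ∀ ξ < γ, d ξ ∈ C ∧ ξ < d ξ ∧ ∀ c ∈ C, ξ < c → d ξ ≤ c := by
          intro ξ hξ
          obtain ⟨c, hc, hc2⟩ := hC.2.1 ξ hξ
          have hne2 : {c | c ∈ C ∧ ξ < c}.Nonempty := ⟨c, hc, hc2⟩
          simp only [d, dif_pos hne2]
          exact ⟨(wf.min_mem _ hne2).1, (wf.min_mem _ hne2).2,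
            fun c' hc' h' => not_lt.1 (wf.not_lt_min _ (show c' ∈ {c | c ∈ C ∧ ξ < c} from ⟨hc', h'⟩))⟩
        refine ⟨fun ξ => G (d ξ) ξ, fun α hα hαγ => ?_⟩
        have hαC : α ∉ C := hCnotE α hα hαγ
        by_cases hCα : (C ∩ Set.Iio α).Nonempty
        · -- there are club points below α
          have hubα : α ∈ upperBounds (C ∩ Set.Iio α) := fun x hx => le_of_lt hx.2
          obtain ⟨σ, hσlub⟩ := exists_isLUB_of_wf wf hCα hubα
          have hσα : σ ≤ α := hσlub.2 hubα
          have hσγ : σ < γ := lt_of_le_of_lt hσα hαγ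
          have hσC : σ ∈ C := hC.2.2 _ inter_subset_left hCα σ hσγ hσlub
          have hσα' : σ < α := lt_of_le_of_ne hσα (fun h => hαC (h ▸ hσC))
          obtain ⟨hdσC, hdσ, hdσmin⟩ := hd σ hσγ
          have hαcp : α < d σ := by
            rcases lt_trichotomy (d σ) α with h | h | h
            · exact absurd (hσlub.1 ⟨hdσC, h⟩) (not_le.2 hdσ)
            · exact absurd (h ▸ hdσC) hαC
            · exact h
          obtain ⟨n₁, hn₁⟩ := hG (d σ) (hCsub hdσC) α hα hαcp
          refine ⟨max n₁ (rk α σ + 1), fun ξ hξ => ?_⟩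
          by_cases hξσ : σ ≤ ξ
          · have hdd : d ξ = d σ := by
              obtain ⟨hdξC, hdξ, hdξmin⟩ := hd ξ (lt_trans hξ hαγ)
              exact le_antisymm (hdξmin (d σ) hdσC (lt_trans hξ hαcp))
                (hdσmin (d ξ) hdξC (lt_of_le_of_lt hξσ hdξ))
            show rk α ξ < G (d ξ) ξ + max n₁ (rk α σ + 1)
            rw [hdd]
            have := hn₁ ξ hξ
            have h2 : n₁ ≤ max n₁ (rk α σ + 1) := le_max_left _ _
            omega
          · push_neg at hξσ
            have h3 : rk α ξ ≤ rk α σ := hrk_mono α hα ξ σ hξσ.le hσα'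
            have h4 : rk α σ + 1 ≤ max n₁ (rk α σ + 1) := le_max_right _ _
            show rk α ξ < G (d ξ) ξ + max n₁ (rk α σ + 1)
            omega
        · -- no club points below α
          have hallC : ∀ c ∈ C, α < c := by
            intro c hc
            rcases lt_trichotomy c α with h | h | h
            · exact absurd (⟨c, hc, h⟩ : (C ∩ Set.Iio α).Nonempty) hCα
            · exact absurd (h ▸ hc) hαC
            · exact h
          have hx0 : lad α 0 < α := (hlad α hα).2.1 0
          obtain ⟨hdC, hdgt, hdmin⟩ := hd (lad α 0) (lt_trans hx0 hαγ)
          have hαcp : α < d (lad α 0) := hallC _ hdC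
          obtain ⟨n₁, hn₁⟩ := hG (d (lad α 0)) (hCsub hdC) α hα hαcp
          refine ⟨n₁, fun ξ hξ => ?_⟩
          have hdd : d ξ = d (lad α 0) := by
            obtain ⟨hdξC, hdξ2, hdξmin⟩ := hd ξ (lt_trans hξ hαγ)
            exact le_antisymm (hdξmin _ hdC (lt_trans hξ hαcp))
              (hdmin _ hdξC (lt_trans hx0 (hallC _ hdξC)))
          show rk α ξ < G (d ξ) ξ + n₁
          rw [hdd]
          exact hn₁ ξ hξ
      · -- successor case
        push_neg at h1
        obtain ⟨x, hxγ, hxmax⟩ := h1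
        obtain ⟨g, hg⟩ := IH x hxγ
        refine ⟨fun ξ => max (g ξ) (rk x ξ + 1), fun α hα hαγ => ?_⟩
        have hαx : α ≤ x := not_lt.1 (fun h => absurd hαγ (not_lt.2 (hxmax α h)))
        rcases lt_or_eq_of_le hαx with h | h
        · obtain ⟨n, hn⟩ := hg α hα h
          refine ⟨n, fun ξ hξ => ?_⟩
          have := hn ξ hξ
          have h2 : g ξ ≤ max (g ξ) (rk x ξ + 1) := le_max_left _ _
          show rk α ξ < max (g ξ) (rk x ξ + 1) + n
          omega
        · subst h
          refine ⟨1, fun ξ hξ => ?_⟩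
          have h2 : rk α ξ + 1 ≤ max (g ξ) (rk α ξ + 1) := le_max_right _ _
          show rk α ξ < max (g ξ) (rk α ξ + 1) + 1
          omega
    · exact ⟨fun _ => 0, fun α _ hαγ => absurd ⟨α, hαγ⟩ h0⟩
  -- some level set of any f : ι → ℕ is unbounded
  have hlevel : ∀ f : ι → ℕ, ∃ m : ℕ, ∀ y, ∃ a, f a ≤ m ∧ y < a := by
    intro f
    by_contra h
    push_neg at h
    choose b hb using h
    obtain ⟨y₀, hy₀⟩ := hcard (Set.range b)
      (lt_of_le_of_lt (Cardinal.mk_range_le.trans_eq Cardinal.mk_nat) hθω)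
    have h1 := hy₀ (b (f y₀)) (Set.mem_range_self _)
    have h2 := hb (f y₀) y₀ le_rfl
    exact absurd h1 (not_lt.2 h2)
  -- from stationarity: a point of E which is a limit of a level set of f
  have hclub : ∀ f : ι → ℕ, ∃ β ∈ E, ∃ m : ℕ, ∀ x < β, ∃ a, f a ≤ m ∧ x < a ∧ a < β := by
    intro f
    obtain ⟨m, hm⟩ := hlevel f
    have hcl : IsClubIn {y : ι | (∃ x, x < y) ∧ ∀ x < y, ∃ a, f a ≤ m ∧ x < a ∧ a < y} := by
      constructor
      · intro x
        choose nxt hnxt1 hnxt2 using hm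
        let a : ℕ → ι := fun n => Nat.rec (nxt x) (fun _ p => nxt p) n
        have ha1 : ∀ n, f (a n) ≤ m := by
          intro n; cases n
          · exact hnxt1 x
          · exact hnxt1 _
        have ha2 : ∀ n, a n < a (n + 1) := fun n => hnxt2 (a n)
        have hax : x < a 0 := hnxt2 x
        obtain ⟨yb, hyb⟩ := hcard (Set.range a)
          (lt_of_le_of_lt (Cardinal.mk_range_le.trans_eq Cardinal.mk_nat) hθω)
        have hub : yb ∈ upperBounds (Set.range a) := by
          rintro z ⟨n, rfl⟩
          exact (hyb (a n) (Set.mem_range_self n)).le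
        obtain ⟨y, hy⟩ := exists_isLUB_of_wf wf ⟨a 0, Set.mem_range_self 0⟩ hub
        have hay : ∀ n, a n ≤ y := fun n => hy.1 (Set.mem_range_self n)
        refine ⟨y, ⟨⟨a 0, lt_of_lt_of_le (ha2 0) (hay 1)⟩, ?_⟩, lt_of_lt_of_le hax (hay 0)⟩
        intro z hz
        have hcof : ∃ n, z < a n := by
          refine Classical.byContradiction fun h => ?_
          push_neg at h
          have : y ≤ z := hy.2 (by rintro w ⟨n, rfl⟩; exact h n)
          exact absurd hz (not_lt.2 this)
        obtain ⟨n, hn⟩ := hcof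
        exact ⟨a n, ha1 n, hn, lt_of_lt_of_le (ha2 n) (hay (n + 1))⟩
      · intro s hs hsne x hx
        obtain ⟨t, ht⟩ := hsne
        refine ⟨?_, ?_⟩
        · obtain ⟨⟨w, hw⟩, _⟩ := hs ht
          exact ⟨w, lt_of_lt_of_le hw (hx.1 ht)⟩
        · intro z hz
          have hzt : ∃ t' ∈ s, z < t' := by
            by_contra h
            push_neg at h
            exact absurd hz (not_lt.2 (hx.2 h))
          obtain ⟨t', hts, hzt'⟩ := hzt
          obtain ⟨_, h2⟩ := hs hts
          obtain ⟨a, h3, h4, h5⟩ := h2 z hzt'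
          exact ⟨a, h3, h4, lt_of_lt_of_le h5 (hx.1 hts)⟩
    obtain ⟨β, hβE, hβC⟩ := hE2 _ hcl
    exact ⟨β, hβE, m, hβC.2⟩
  -- non-extendibility
  have hnonext : ∀ f : ι → ℕ, ∃ β ∈ E, ∀ n : ℕ, ∃ ξ, ξ < β ∧ f ξ + n < rk β ξ := by
    intro f
    obtain ⟨β, hβE, m, hβ⟩ := hclub f
    refine ⟨β, hβE, fun n => ?_⟩
    have hlk : lad β (m + n) < β := (hlad β hβE).2.1 _
    obtain ⟨a, ham, hla, haβ⟩ := hβ (lad β (m + n)) hlk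
    refine ⟨a, haβ, ?_⟩
    have := hrk_big β hβE a haβ (m + n) hla
    omega
  -- the good set
  letI tF : TopologicalSpace (Option (ι × ℕ)) := fanTopology ι
  have hopen : ∀ u : Set (Option (ι × ℕ)), IsOpen u → none ∈ u →
      ∃ f : ι → ℕ, ∀ p : ι × ℕ, f p.1 ≤ p.2 → some p ∈ u := fun u hu => hu
  have hBopen : ∀ f : ι → ℕ,
      IsOpen {x : Option (ι × ℕ) | x = none ∨ ∃ p : ι × ℕ, x = some p ∧ f p.1 ≤ p.2} :=
    fun f _ => ⟨f, fun p hp => Or.inr ⟨p, rfl, hp⟩⟩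
  refine ⟨{p | ∃ β ∈ E, ∃ ξ, ξ < β ∧ ∃ n : ℕ, p = (some (ξ, rk β ξ - n), some (β, n))}, ?_, ?_⟩
  · -- (none, none) is in the closure
    show (none, none) ∈ closure {p : Option (ι × ℕ) × Option (ι × ℕ) |
      ∃ β ∈ E, ∃ ξ, ξ < β ∧ ∃ n : ℕ, p = (some (ξ, rk β ξ - n), some (β, n))}
    rw [mem_closure_iff]
    intro U hU hmem
    rw [isOpen_prod_iff] at hU
    obtain ⟨u, v, hu, hv, hnu, hnv, huv⟩ := hU none none hmem
    obtain ⟨f, hf⟩ := hopen u hu hnu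
    obtain ⟨g, hg⟩ := hopen v hv hnv
    obtain ⟨β, hβE, hβ⟩ := hnonext f
    obtain ⟨ξ, hξβ, hξ⟩ := hβ (g β)
    refine ⟨(some (ξ, rk β ξ - g β), some (β, g β)), huv ⟨?_, ?_⟩,
      β, hβE, ξ, hξβ, g β, rfl⟩
    · exact hf _ (by simp only []; omega)
    · exact hg _ le_rfl
  · -- small subsets are not dense at (none, none)
    intro T hTS hT
    intro hcl
    have hcl' : (none, none) ∈ closure T := hcl
    set eT : Option (ι × ℕ) × Option (ι × ℕ) → ι := fun p => ((p.2).getD (x₀, 0)).1 with heT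
    have hA : #(eT '' T) < θ := lt_of_le_of_lt Cardinal.mk_image_le hT
    obtain ⟨γ₀, hγ₀⟩ := hcard _ hA
    obtain ⟨γ, hγ⟩ := hcard {γ₀}
      (by rw [Cardinal.mk_singleton]; exact lt_trans Cardinal.one_lt_aleph0 hθω)
    have hγ₀γ : γ₀ < γ := hγ γ₀ rfl
    obtain ⟨g, hg⟩ := key γ
    let N : ι → ℕ := fun β => if h : β ∈ E ∧ β < γ then (hg β h.1 h.2).choose else 0
    have hN : ∀ β, ∀ h1 : β ∈ E, ∀ h2 : β < γ, ∀ ξ < β, rk β ξ < g ξ + N β := by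
      intro β h1 h2
      simp only [N, dif_pos (show β ∈ E ∧ β < γ from ⟨h1, h2⟩)]
      exact (hg β h1 h2).choose_spec
    rw [mem_closure_iff] at hcl'
    obtain ⟨p, hpU, hpT⟩ := hcl'
      ({x : Option (ι × ℕ) | x = none ∨ ∃ q : ι × ℕ, x = some q ∧ g q.1 + 1 ≤ q.2} ×ˢ
       {x : Option (ι × ℕ) | x = none ∨ ∃ q : ι × ℕ, x = some q ∧ N q.1 ≤ q.2})
      (IsOpen.prod (hBopen (fun x => g x + 1)) (hBopen N)) ⟨Or.inl rfl, Or.inl rfl⟩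
    obtain ⟨β, hβE, ξ, hξβ, n, hp⟩ := hTS hpT
    rw [hp] at hpU
    obtain ⟨h1, h2⟩ := hpU
    rcases h1 with h1 | ⟨q, hq, hq2⟩
    · exact absurd h1 (by simp)
    rcases h2 with h2 | ⟨q', hq', hq2'⟩
    · exact absurd h2 (by simp)
    have hq3 : q = (ξ, rk β ξ - n) := (Option.some.inj hq).symm
    have hq3' : q' = (β, n) := (Option.some.inj hq').symm
    subst hq3; subst hq3'
    simp only at hq2 hq2'
    -- β is in the image, so β < γ
    have hβA : β ∈ eT '' T := ⟨p, hpT, by rw [hp]; rfl⟩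
    have hβγ : β < γ := lt_trans (hγ₀ β hβA) hγ₀γ
    have h5 := hN β hβE hβγ ξ hξβ
    omega

end AuxStatement14

/-- If `θ` is regular uncountable and there is a non-reflecting stationary
set `E ⊆ {α < θ : cf(α) = ω}`, then there is a `θ`-good subset of `F_{θ,ω} × F_{θ,ω}`. -/
theorem statement14 (θ : Cardinal) (hreg : θ.IsRegular) (hθ : ℵ₀ < θ)
    (hE : ∃ E : Set θ.ord.ToType,
      (∀ α ∈ E, CofOmega α) ∧ IsStationaryIn E ∧ NonReflecting E) :
    ∃ S : Set (Option (θ.ord.ToType × ℕ) × Option (θ.ord.ToType × ℕ)),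
      IsThetaGood θ S := by
  obtain ⟨E, hE1, hE2, hE3⟩ := hE
  have hord0 : θ.ord ≠ 0 := by
    intro h
    have h2 : (ℵ₀ : Cardinal).ord ≤ θ.ord := Cardinal.ord_le_ord.2 (le_of_lt hθ)
    rw [h, Cardinal.ord_aleph0] at h2
    exact absurd h2 (not_le.2 Ordinal.omega0_pos)
  have hcard : ∀ A : Set θ.ord.ToType, #A < θ → ∃ y, ∀ a ∈ A, a < y := by
    intro A hA
    have hlim : Order.IsSuccLimit θ.ord := Cardinal.isSuccLimit_ord hreg.1
    let f : A → Ordinal.{0} := fun a => Ordinal.typein (α := θ.ord.ToType) (· < ·) a.1 + 1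
    have hf : ∀ a : A, f a < θ.ord := fun a => by
      show Ordinal.typein (α := θ.ord.ToType) (· < ·) a.1 + 1 < θ.ord
      rw [Ordinal.add_one_eq_succ]
      exact hlim.succ_lt (Ordinal.typein_lt_self a.1)
    have hsup : iSup f < θ.ord := Cardinal.iSup_lt_ord_of_isRegular hreg hA hf
    refine ⟨(Ordinal.ToType.mk (o := θ.ord)) ⟨iSup f, hsup⟩, fun a ha => ?_⟩
    have h1 : a = (Ordinal.ToType.mk (o := θ.ord)) ⟨Ordinal.typein (α := θ.ord.ToType) (· < ·) a,
        Ordinal.typein_lt_self a⟩ :=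
      (((Ordinal.ToType.mk (o := θ.ord))).apply_symm_apply a).symm
    rw [h1, ((Ordinal.ToType.mk (o := θ.ord))).lt_iff_lt]
    have h2 : Ordinal.typein (α := θ.ord.ToType) (· < ·) a < iSup f :=
      lt_of_lt_of_le (lt_add_one _) (Ordinal.le_iSup f ⟨a, ha⟩)
    exact h2
  exact master14 θ (wellFoundedLT_toType θ.ord).wf
    (Ordinal.toType_nonempty_iff_ne_zero.2 hord0) hθ hcard E hE1 hE2 hE3
end
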